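/- arXiv:1507.04203 — 11 statements merged into one kernel-verified Lean document; each statement's English description precedes it below -/
import Mathlib

section
/- Let K be a field of characteristic zero and let F be a formal power series in two variables X and Y over K. Then the differential equation Y' = F(X,Y) with initial condition Y(0) = 0 admits a unique formal power series solution: there exists exactly one formal power series S in K[[X]] with zero constant term such that S' = F(X,S), where S' is the formal derivative of S and F(X,S) denotes the substitution of S for the second variable of F (well defined because S has zero constant term). -/
/-- Substitution `F(X, g)` of the power series `X` for the first variable and a
one-variable power series `g` (intended to have zero constant term) for the second
variable of a two-variable formal power series `F`.  The coefficient of `X^n` is the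
(finite, when `g` has zero constant term) sum
`∑_d coeff_d F · coeff_n (X^{d₀} · g^{d₁})`. -/
noncomputable def PowerSeries.substXY {K : Type*} [Field K]
    (F : MvPowerSeries (Fin 2) K) (g : PowerSeries K) : PowerSeries K :=
  PowerSeries.mk fun n =>
    ∑ i ∈ Finset.range (n + 1), ∑ j ∈ Finset.range (n + 1),
      MvPowerSeries.coeff (Finsupp.single 0 i + Finsupp.single 1 j) F *
        PowerSeries.coeff n (PowerSeries.X ^ i * g ^ j)

/-!
Comparing coefficients of `X^n` in `S' = F(X, S)` gives `(n + 1) s_{n+1} = c_n`, where `c_n`,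
the coefficient of `X^n` in `F(X, S)`, only depends on `s_0, …, s_n`. In characteristic zero
this determines the coefficients of `S` recursively from `s_0 = 0`, and the recursion defines
a solution. The argument works for any right-hand side `Φ(S)` with this causality property.
-/

namespace PowerSeries

section Truncation

variable {R : Type*} [CommSemiring R] {n : ℕ} {f g : R⟦X⟧}

theorem coeff_eq_of_trunc_eq (h : trunc n f = trunc n g) {m : ℕ} (hm : m < n) :
    coeff m f = coeff m g := by
  simpa [coeff_trunc, hm] using congrArg (Polynomial.coeff · m) h

theorem trunc_pow_eq_of_trunc_eq (h : trunc n f = trunc n g) (j : ℕ) :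
    trunc n (f ^ j) = trunc n (g ^ j) := by
  rw [← trunc_trunc_pow, h, trunc_trunc_pow]

theorem trunc_mul_eq_of_trunc_eq (h : trunc n f = trunc n g) (p : R⟦X⟧) :
    trunc n (p * f) = trunc n (p * g) := by
  rw [← trunc_mul_trunc, h, trunc_mul_trunc]

def IsCausal (Φ : R⟦X⟧ → R⟦X⟧) : Prop :=
  ∀ ⦃n : ℕ⦄ ⦃f g : R⟦X⟧⦄, trunc (n + 1) f = trunc (n + 1) g → coeff n (Φ f) = coeff n (Φ g)

end Truncation

section CausalODE

variable {K : Type*} [Field K] {Φ : K⟦X⟧ → K⟦X⟧}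

variable (Φ) in
/-- Only the coefficients `k ≤ n` are passed to `Φ` (needed for termination); by causality,
the zero padding does not affect coefficient `n` of the result. -/
noncomputable def odeSolutionCoeff (a : K) : ℕ → K
  | 0 => a
  | n + 1 =>
    coeff n (Φ (mk fun k => if _ : k ≤ n then odeSolutionCoeff a k else 0)) / (n + 1)

variable (Φ) in
noncomputable def odeSolution (a : K) : K⟦X⟧ :=
  mk (odeSolutionCoeff Φ a)

theorem constantCoeff_odeSolution (a : K) : constantCoeff (odeSolution Φ a) = a := by
  rw [← coeff_zero_eq_constantCoeff_apply, odeSolution, coeff_mk, odeSolutionCoeff]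

theorem trunc_odeSolution (a : K) (n : ℕ) :
    trunc (n + 1) (odeSolution Φ a) =
      trunc (n + 1) (mk fun k => if _ : k ≤ n then odeSolutionCoeff Φ a k else 0) := by
  ext m
  simp only [coeff_trunc, odeSolution, coeff_mk, Nat.lt_succ_iff]
  split_ifs <;> rfl

variable [CharZero K]

theorem coeff_succ_eq_of_derivative_eq (hΦ : IsCausal Φ) {S T : K⟦X⟧}
    (hS : derivative K S = Φ S) (hT : derivative K T = Φ T) {n : ℕ}
    (h : trunc (n + 1) S = trunc (n + 1) T) : coeff (n + 1) S = coeff (n + 1) T := by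
  have hscaled : coeff (n + 1) S * (n + 1) = coeff (n + 1) T * (n + 1) := by
    rw [← coeff_derivative, ← coeff_derivative, hS, hT, hΦ h]
  exact mul_right_cancel₀ (Nat.cast_add_one_ne_zero n) hscaled

theorem eq_of_derivative_eq (hΦ : IsCausal Φ) {S T : K⟦X⟧}
    (h0 : constantCoeff S = constantCoeff T)
    (hS : derivative K S = Φ S) (hT : derivative K T = Φ T) : S = T := by
  have htrunc : ∀ n, trunc n S = trunc n T := by
    intro n
    induction n with
    | zero => rfl
    | succ n ih =>
      have hcoeff : coeff n S = coeff n T := by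
        cases n with
        | zero => simpa using h0
        | succ m => exact coeff_succ_eq_of_derivative_eq hΦ hS hT ih
      rw [trunc_succ, trunc_succ, ih, hcoeff]
  ext n
  exact coeff_eq_of_trunc_eq (htrunc (n + 1)) n.lt_succ_self

theorem derivative_odeSolution (hΦ : IsCausal Φ) (a : K) :
    derivative K (odeSolution Φ a) = Φ (odeSolution Φ a) := by
  ext n
  rw [coeff_derivative, hΦ (trunc_odeSolution a n), odeSolution, coeff_mk, odeSolutionCoeff,
    div_mul_cancel₀ _ (Nat.cast_add_one_ne_zero n)]

theorem existsUnique_derivative_eq (hΦ : IsCausal Φ) (a : K) :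
    ∃! S : K⟦X⟧, constantCoeff S = a ∧ derivative K S = Φ S := by
  refine ⟨odeSolution Φ a, ⟨constantCoeff_odeSolution a, derivative_odeSolution hΦ a⟩, ?_⟩
  rintro T ⟨hT0, hT⟩
  exact eq_of_derivative_eq hΦ (by rw [hT0, constantCoeff_odeSolution]) hT
    (derivative_odeSolution hΦ a)

end CausalODE

theorem isCausal_substXY {K : Type*} [Field K] (F : MvPowerSeries (Fin 2) K) :
    IsCausal (substXY F) := by
  intro n f g h
  simp only [substXY, coeff_mk]
  refine Finset.sum_congr rfl fun i _ => Finset.sum_congr rfl fun j _ => ?_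
  rw [coeff_eq_of_trunc_eq (trunc_mul_eq_of_trunc_eq (trunc_pow_eq_of_trunc_eq h j) _)
    n.lt_succ_self]

end PowerSeries

/-- The differential equation `Y' = F(X, Y)` with initial condition `Y(0) = 0`
admits a unique formal power series solution. -/
theorem unique_powerSeries_solution_of_ode {K : Type*} [Field K] [CharZero K]
    (F : MvPowerSeries (Fin 2) K) :
    ∃! S : PowerSeries K, PowerSeries.constantCoeff S = 0 ∧
      PowerSeries.derivative K S = PowerSeries.substXY F S :=
  PowerSeries.existsUnique_derivative_eq (PowerSeries.isCausal_substXY F) 0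
end

section
/- Let K be a field of characteristic zero and F a formal power series in two variables over K. For Y in K[[X]] with zero constant term, let G(Y) denote the antiderivative with zero constant term of F(X,Y). Then for any two formal power series Y₁ ≠ Y₂ in K[[X]], both with zero constant term, one has val(G(Y₁) − G(Y₂)) > val(Y₁ − Y₂). -/
/-- The antiderivative with zero constant term of a formal power series:
`∑ c_n X^n ↦ ∑ c_n X^{n+1}/(n+1)`. -/
noncomputable def PowerSeries.integral {K : Type*} [Field K] (f : PowerSeries K) :
    PowerSeries K :=
  PowerSeries.mk fun n => if n = 0 then 0 else PowerSeries.coeff (n - 1) f / (n : K)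

/-!
`F(X, Y₁) - F(X, Y₂)` is a sum of terms `c • X^i (Y₁^j - Y₂^j)`, each divisible by `Y₁ - Y₂`,
so substitution does not lower the order of `Y₁ - Y₂`; integration then raises it by one.
-/

namespace PowerSeries

theorem order_le_order_of_dvd {R : Type*} [CommSemiring R] {φ ψ : R⟦X⟧} (h : φ ∣ ψ) :
    φ.order ≤ ψ.order := by
  obtain ⟨c, rfl⟩ := h
  exact le_self_add.trans (le_order_mul φ c)

theorem order_sub_le_order_pow_sub_pow {R : Type*} [CommRing R] (φ ψ : R⟦X⟧) (j : ℕ) :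
    (φ - ψ).order ≤ (φ ^ j - ψ ^ j).order :=
  order_le_order_of_dvd (sub_dvd_pow_sub_pow φ ψ j)

variable {K : Type*} [Field K]

theorem order_sub_le_order_substXY_sub (F : MvPowerSeries (Fin 2) K) (Y₁ Y₂ : K⟦X⟧) :
    (Y₁ - Y₂).order ≤ (substXY F Y₁ - substXY F Y₂).order := by
  refine le_order _ _ fun k hk => ?_
  simp only [map_sub, substXY, coeff_mk, ← Finset.sum_sub_distrib, ← mul_sub]
  refine Finset.sum_eq_zero fun i _ => Finset.sum_eq_zero fun j _ => ?_
  rw [← map_sub, ← mul_sub, coeff_of_lt_order, mul_zero]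
  exact hk.trans_le <| (order_sub_le_order_pow_sub_pow Y₁ Y₂ j).trans <|
    order_le_order_of_dvd (dvd_mul_left _ _)

theorem integral_sub (f g : K⟦X⟧) : (f - g).integral = f.integral - g.integral := by
  ext n
  simp only [integral, coeff_mk, map_sub]
  split_ifs
  · simp
  · exact sub_div _ _ _

theorem order_add_one_le_order_integral (f : K⟦X⟧) : f.order + 1 ≤ f.integral.order := by
  refine le_order _ _ fun i hi => ?_
  rw [integral, coeff_mk]
  rcases i with _ | n
  · simp
  · have hn : (n : ℕ∞) < f.order := by
      rw [Nat.cast_succ] at hi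
      exact (ENat.add_lt_add_iff_right ENat.one_ne_top).mp hi
    simp [coeff_of_lt_order n hn]

end PowerSeries

theorem order_integral_sub_gt_general {K : Type*} [Field K]
    (F : MvPowerSeries (Fin 2) K) (Y₁ Y₂ : PowerSeries K)
    (hne : Y₁ ≠ Y₂) :
    (Y₁ - Y₂).order <
      ((PowerSeries.substXY F Y₁).integral - (PowerSeries.substXY F Y₂).integral).order := by
  have hfin : (Y₁ - Y₂).order ≠ ⊤ := by
    rwa [ne_eq, PowerSeries.order_eq_top, sub_eq_zero]
  rw [← PowerSeries.integral_sub]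
  calc (Y₁ - Y₂).order < (Y₁ - Y₂).order + 1 := (ENat.lt_add_one_iff hfin).2 le_rfl
    _ ≤ (PowerSeries.substXY F Y₁ - PowerSeries.substXY F Y₂).order + 1 := by
      gcongr
      exact PowerSeries.order_sub_le_order_substXY_sub F Y₁ Y₂
    _ ≤ _ := PowerSeries.order_add_one_le_order_integral _

/-- The operator `G : Y ↦ ∫ F(X, Y)` is a contraction on power series with zero
constant term: `val(G(Y₁) − G(Y₂)) > val(Y₁ − Y₂)` whenever `Y₁ ≠ Y₂`. -/
theorem order_integral_sub_gt {K : Type*} [Field K] [CharZero K]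
    (F : MvPowerSeries (Fin 2) K) (Y₁ Y₂ : PowerSeries K)
    (h₁ : PowerSeries.constantCoeff Y₁ = 0)
    (h₂ : PowerSeries.constantCoeff Y₂ = 0)
    (hne : Y₁ ≠ Y₂) :
    (Y₁ - Y₂).order <
      ((PowerSeries.substXY F Y₁).integral - (PowerSeries.substXY F Y₂).integral).order :=
  order_integral_sub_gt_general F Y₁ Y₂ hne
end

section
/- Let K be a field of characteristic zero, let K(z) be the field of rational functions over K equipped with the derivation extending d/dz on K[z], and let F ∈ K(z)[Y] be a polynomial of degree d > 0 in Y. Let (P_k) and (Q_k) be sequences of rational functions in K(z) such that each of them satisfies a nontrivial linear recurrence Σ_{i=0}^{M} c_i(k)·u_{k+i} = 0 for all k ≥ 0, where the c_i are polynomials in k with coefficients in K[z] and the leading coefficient c_M evaluated at each natural number k is a nonzero element of K(z). Assume Q_k ≠ 0 for all k, and define H_k := Q_k^{max(2,d)}·((P_k/Q_k)' − F(P_k/Q_k)), where F(P_k/Q_k) is the evaluation of the polynomial F at P_k/Q_k. Then (H_k) satisfies a nontrivial linear recurrence with coefficients that are polynomials in k with coefficients in K[z]: there exist N ∈ ℕ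 and polynomials e_0,…,e_N in k with coefficients in K[z], not all zero, such that Σ_{i=0}^{N} e_i(k)·H_{k+i} = 0 for all k ≥ 0. -/
/-!
Let `B` (`ratSeq`) be the ring of sequences `k ↦ p(k) / q(k)` with `p, q ∈ K(z)[k]` and `q`
without zeros on `ℕ`, and call a sequence confined (`confinedSeq`) when it lies in a finitely
generated `B`-submodule stable under the shift. Confined sequences form a `B`-algebra.
A recurrence whose leading coefficient never vanishes expresses the `M`-th shift of `u` over `B`
through the earlier ones; since `B` is stable under `D` (which kills the constants `k`),
differentiating it does the same for `u'`, so `u` and `u'` are confined. Hence so is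
`H = Q^(m-2) (Q P' - P Q') - Σ F_j P^j Q^(m-j)`. Conversely, in a module generated by `n`
elements any `n + 1` shifts are linearly dependent over `B` (strong rank condition), and
clearing denominators in `B` and then in `K(z)` turns such a dependence into a recurrence with
coefficients in `K[z][k]`.
-/

open Polynomial

namespace PRecursive

def shift {α : Type*} (u : ℕ → α) : ℕ → α := fun k => u (k + 1)

@[simp]
theorem shift_iterate_apply {α : Type*} (u : ℕ → α) (n k : ℕ) :
    shift^[n] u k = u (k + n) := by
  induction n generalizing u with
  | zero => rfl
  | succ n ih => rw [Function.iterate_succ_apply, ih, shift, add_assoc]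

variable {L : Type*} [Field L] {R : Type*} [CommRing R] [Algebra R L] (D : Derivation R L L)

variable (L) in
def ratSeq : Subring (ℕ → L) where
  carrier := {f | ∃ p q : L[X], (∀ k : ℕ, q.eval (k : L) ≠ 0) ∧
    f = fun k : ℕ => p.eval (k : L) / q.eval (k : L)}
  one_mem' := ⟨1, 1, by simp, by ext; simp⟩
  zero_mem' := ⟨0, 1, by simp, by ext; simp⟩
  mul_mem' := by
    rintro f g ⟨p₁, q₁, hq₁, rfl⟩ ⟨p₂, q₂, hq₂, rfl⟩
    refine ⟨p₁ * p₂, q₁ * q₂, fun k => by simp [hq₁ k, hq₂ k], ?_⟩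
    ext k
    simp only [Pi.mul_apply, eval_mul, div_mul_div_comm]
  add_mem' := by
    rintro f g ⟨p₁, q₁, hq₁, rfl⟩ ⟨p₂, q₂, hq₂, rfl⟩
    refine ⟨p₁ * q₂ + q₁ * p₂, q₁ * q₂, fun k => by simp [hq₁ k, hq₂ k], ?_⟩
    ext k
    simp only [Pi.add_apply, eval_add, eval_mul, div_add_div _ _ (hq₁ k) (hq₂ k)]
  neg_mem' := by
    rintro f ⟨p, q, hq, rfl⟩
    exact ⟨-p, q, hq, by ext; simp [neg_div]⟩

theorem ratSeq_smul_apply (b : ratSeq L) (u : ℕ → L) (k : ℕ) : (b • u) k = b.1 k * u k :=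
  rfl

theorem div_eval_mem_ratSeq (p q : L[X]) (hq : ∀ k : ℕ, q.eval (k : L) ≠ 0) :
    (fun k : ℕ => p.eval (k : L) / q.eval (k : L)) ∈ ratSeq L :=
  ⟨p, q, hq, rfl⟩

theorem const_mem_ratSeq (a : L) : (fun _ : ℕ => a) ∈ ratSeq L :=
  ⟨C a, 1, by simp, by ext; simp⟩

theorem shift_mem_ratSeq {f : ℕ → L} (hf : f ∈ ratSeq L) : shift f ∈ ratSeq L := by
  obtain ⟨p, q, hq, rfl⟩ := hf
  refine ⟨p.comp (X + 1), q.comp (X + 1), fun k => by simpa using hq (k + 1), ?_⟩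
  ext k
  simp [shift]

theorem exists_derivation_eval_natCast (p : L[X]) :
    ∃ p' : L[X], ∀ k : ℕ, D (p.eval (k : L)) = p'.eval (k : L) := by
  induction p using Polynomial.induction_on' with
  | add p q hp hq =>
    obtain ⟨p', hp'⟩ := hp
    obtain ⟨q', hq'⟩ := hq
    exact ⟨p' + q', fun k => by simp [hp', hq']⟩
  | monomial n a =>
    refine ⟨monomial n (D a), fun k => ?_⟩
    rw [eval_monomial, eval_monomial, Derivation.leibniz, ← Nat.cast_pow, D.map_natCast]
    simp [mul_comm]

theorem derivation_comp_mem_ratSeq {f : ℕ → L} (hf : f ∈ ratSeq L) :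
    ⇑D ∘ f ∈ ratSeq L := by
  obtain ⟨p, q, hq, rfl⟩ := hf
  obtain ⟨p', hp'⟩ := exists_derivation_eval_natCast D p
  obtain ⟨q', hq'⟩ := exists_derivation_eval_natCast D q
  refine ⟨p' * q - p * q', q ^ 2, fun k => by simpa using pow_ne_zero 2 (hq k), ?_⟩
  ext k
  simp only [Function.comp_apply, Derivation.leibniz_div, hp', hq', eval_sub, eval_mul, eval_pow,
    smul_eq_mul]
  field_simp

theorem exists_common_denominator {ι : Type*} [Fintype ι] (b : ι → ratSeq L) :
    ∃ (q : L[X]) (p : ι → L[X]), (∀ k : ℕ, q.eval (k : L) ≠ 0) ∧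
      ∀ i (k : ℕ), q.eval (k : L) * (b i).1 k = (p i).eval (k : L) := by
  classical
  choose p q hq hb using fun i => (b i).2
  refine ⟨∏ i, q i, fun i => p i * ∏ j ∈ Finset.univ.erase i, q j,
    fun k => by simpa [eval_prod, Finset.prod_eq_zero_iff] using fun i => hq i k, fun i k => ?_⟩
  rw [hb i, eval_prod, eval_mul, eval_prod, ← Finset.mul_prod_erase _ _ (Finset.mem_univ i)]
  field_simp [hq i k]

theorem shift_mem_span {S : Set (ℕ → L)}
    (hS : ∀ x ∈ S, shift x ∈ Submodule.span (ratSeq L) S)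
    {v : ℕ → L} (hv : v ∈ Submodule.span (ratSeq L) S) :
    shift v ∈ Submodule.span (ratSeq L) S := by
  induction hv using Submodule.span_induction with
  | mem x hx => exact hS x hx
  | zero => exact zero_mem _
  | add x y _ _ hx hy => exact add_mem hx hy
  | smul b x _ hx => exact Submodule.smul_mem _ ⟨shift b.1, shift_mem_ratSeq b.2⟩ hx

variable (L) in
def confinedSeq : Subalgebra (ratSeq L) (ℕ → L) where
  carrier :=
    {u | ∃ W : Submodule (ratSeq L) (ℕ → L),
      W.FG ∧ (∀ w ∈ W, shift w ∈ W) ∧ u ∈ W}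
  mul_mem' := by
    rintro u v ⟨W₁, hW₁, hs₁, hu⟩ ⟨W₂, hW₂, hs₂, hv⟩
    refine ⟨W₁ * W₂, hW₁.mul hW₂, fun w hw => ?_, Submodule.mul_mem_mul hu hv⟩
    exact Submodule.mul_induction_on hw
      (fun x hx y hy => Submodule.mul_mem_mul (hs₁ x hx) (hs₂ y hy)) fun _ _ => add_mem
  add_mem' := by
    rintro u v ⟨W₁, hW₁, hs₁, hu⟩ ⟨W₂, hW₂, hs₂, hv⟩
    refine ⟨W₁ ⊔ W₂, hW₁.sup hW₂, fun w hw => ?_,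
      add_mem (Submodule.mem_sup_left hu) (Submodule.mem_sup_right hv)⟩
    obtain ⟨x, hx, y, hy, rfl⟩ := Submodule.mem_sup.mp hw
    exact add_mem (Submodule.mem_sup_left (hs₁ x hx)) (Submodule.mem_sup_right (hs₂ y hy))
  algebraMap_mem' b := by
    refine ⟨Submodule.span (ratSeq L) {1}, Submodule.fg_span_singleton 1,
      fun w => shift_mem_span ?_, ?_⟩
    · rintro x rfl
      exact Submodule.subset_span rfl
    · rw [Algebra.algebraMap_eq_smul_one]
      exact Submodule.smul_mem _ b (Submodule.subset_span rfl)

theorem span_le_confinedSeq {S : Set (ℕ → L)} (hS : S.Finite)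
    (hshift : ∀ x ∈ S, shift x ∈ Submodule.span (ratSeq L) S) :
    Submodule.span (ratSeq L) S ≤ Subalgebra.toSubmodule (confinedSeq L) :=
  fun _ hv => ⟨_, Submodule.fg_span hS, fun _ => shift_mem_span hshift, hv⟩

theorem const_mem_confinedSeq (a : L) : (fun _ : ℕ => a) ∈ confinedSeq L :=
  Subalgebra.algebraMap_mem _ (⟨_, const_mem_ratSeq a⟩ : ratSeq L)

theorem exists_shift_recurrence {M : ℕ} (a : Fin (M + 1) → L[X])
    (ha : ∀ k : ℕ, (a (Fin.last M)).eval (k : L) ≠ 0) {u : ℕ → L}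
    (hu : ∀ k : ℕ, ∑ i, (a i).eval (k : L) * u (k + i) = 0) :
    ∃ b : Fin M → ratSeq L, shift^[M] u = ∑ i, b i • shift^[i] u := by
  refine ⟨fun i => ⟨_, div_eval_mem_ratSeq (-a i.castSucc) (a (Fin.last M)) ha⟩, ?_⟩
  ext k
  have hk := hu k
  rw [Fin.sum_univ_castSucc] at hk
  simp only [Finset.sum_apply, ratSeq_smul_apply, shift_iterate_apply, Fin.val_last,
    Fin.val_castSucc, div_mul_eq_mul_div, ← Finset.sum_div] at hk ⊢
  rw [eq_div_iff (ha k)]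
  simp only [eval_neg, neg_mul, Finset.sum_neg_distrib]
  linear_combination hk

theorem shift_iterate_derivation_comp_eq_sum {M : ℕ} (b : Fin M → ratSeq L) {u : ℕ → L}
    (hu : shift^[M] u = ∑ i, b i • shift^[i] u) :
    shift^[M] (⇑D ∘ u) = ∑ i, ((⟨⇑D ∘ (b i).1, derivation_comp_mem_ratSeq D (b i).2⟩ :
      ratSeq L) • shift^[i] u + b i • shift^[i] (⇑D ∘ u)) := by
  ext k
  have hk := congrFun hu k
  simp only [Finset.sum_apply, Pi.add_apply, ratSeq_smul_apply, shift_iterate_apply,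
    Function.comp_apply] at hk ⊢
  rw [hk, map_sum]
  refine Finset.sum_congr rfl fun i _ => ?_
  rw [Derivation.leibniz, smul_eq_mul, smul_eq_mul]
  ring

theorem mem_confinedSeq_of_shift_recurrence {M : ℕ} (b : Fin M → ratSeq L) {u : ℕ → L}
    (hu : shift^[M] u = ∑ i, b i • shift^[i] u) :
    u ∈ confinedSeq L ∧ ⇑D ∘ u ∈ confinedSeq L := by
  set S : Set (ℕ → L) := Set.range (fun i : Fin M => shift^[i] u) ∪
    Set.range (fun i : Fin M => shift^[i] (⇑D ∘ u))
  have hgen (i : Fin M) : shift^[i] u ∈ Submodule.span (ratSeq L) S ∧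
      shift^[i] (⇑D ∘ u) ∈ Submodule.span (ratSeq L) S :=
    ⟨Submodule.subset_span (.inl ⟨i, rfl⟩), Submodule.subset_span (.inr ⟨i, rfl⟩)⟩
  have hle (n : ℕ) (hn : n ≤ M) : shift^[n] u ∈ Submodule.span (ratSeq L) S ∧
      shift^[n] (⇑D ∘ u) ∈ Submodule.span (ratSeq L) S := by
    obtain hn | rfl := hn.lt_or_eq
    · exact hgen ⟨n, hn⟩
    rw [hu, shift_iterate_derivation_comp_eq_sum D b hu]
    exact ⟨Submodule.sum_mem _ fun i _ => Submodule.smul_mem _ _ (hgen i).1,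
      Submodule.sum_mem _ fun i _ => add_mem (Submodule.smul_mem _ _ (hgen i).1)
        (Submodule.smul_mem _ _ (hgen i).2)⟩
  have hshift : ∀ x ∈ S, shift x ∈ Submodule.span (ratSeq L) S := by
    rintro x (⟨i, rfl⟩ | ⟨i, rfl⟩) <;> rw [← Function.iterate_succ_apply' shift]
    exacts [(hle (i + 1) i.isLt).1, (hle (i + 1) i.isLt).2]
  have hS : S.Finite := (Set.finite_range _).union (Set.finite_range _)
  exact ⟨span_le_confinedSeq hS hshift (hle 0 M.zero_le).1,
    span_le_confinedSeq hS hshift (hle 0 M.zero_le).2⟩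

theorem exists_recurrence_of_mem_confinedSeq {u : ℕ → L} (hu : u ∈ confinedSeq L) :
    ∃ (N : ℕ) (r : Fin (N + 1) → L[X]), (∃ i, r i ≠ 0) ∧
      ∀ k : ℕ, ∑ i, (r i).eval (k : L) * u (k + i) = 0 := by
  obtain ⟨W, ⟨T, rfl⟩, hshift, hu⟩ := hu
  have hmem (n : ℕ) : shift^[n] u ∈ Submodule.span (ratSeq L) (T : Set (ℕ → L)) := by
    induction n with
    | zero => exact hu
    | succ n ih => exact Function.iterate_succ_apply' shift n u ▸ hshift _ ih
  have hdep : ¬LinearIndependent (ratSeq L) (fun i : Fin (T.card + 1) => shift^[i] u) := by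
    intro hli
    have := linearIndependent_le_span' _ hli (T : Set (ℕ → L))
      (Set.range_subset_iff.mpr fun i => hmem i)
    simp at this
  obtain ⟨g, hg, i₀, hi₀⟩ := Fintype.not_linearIndependent_iff.mp hdep
  obtain ⟨q, p, hq, hp⟩ := exists_common_denominator g
  refine ⟨T.card, p, ⟨i₀, fun h => hi₀ (Subtype.ext (funext fun k => ?_))⟩, fun k => ?_⟩
  · simpa [h, hq k] using hp i₀ k
  · have hk := congrArg (fun v => q.eval (k : L) * v k) hg
    simp only [Finset.sum_apply, ratSeq_smul_apply, shift_iterate_apply, Finset.mul_sum,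
      ← mul_assoc, hp, Pi.zero_apply, mul_zero] at hk
    exact hk

theorem exists_integral_recurrence {A : Type*} [CommRing A] [IsDomain A] [Algebra A L]
    [IsFractionRing A L] {N : ℕ} {r : Fin (N + 1) → L[X]} (hr : ∃ i, r i ≠ 0)
    {u : ℕ → L}
    (hu : ∀ k : ℕ, ∑ i, (r i).eval (k : L) * u (k + i) = 0) :
    ∃ e : Fin (N + 1) → A[X], (∃ i, e i ≠ 0) ∧
      ∀ k : ℕ, ∑ i, algebraMap A L ((e i).eval (k : A)) * u (k + i) = 0 := by
  let := Polynomial.algebra A L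
  have := Polynomial.isLocalization (nonZeroDivisors A) L
  obtain ⟨⟨_, g, hg, rfl⟩, he⟩ :=
    IsLocalization.exist_integer_multiples_of_finite ((nonZeroDivisors A).map C) r
  choose e he using he
  have hmap (i) : (e i).map (algebraMap A L) = C (algebraMap A L g) * r i := by
    have h : (e i).map (algebraMap A L) = (C g).map (algebraMap A L) * r i :=
      (he i).trans (Algebra.smul_def _ _)
    rwa [Polynomial.map_C] at h
  have hg' : algebraMap A L g ≠ 0 :=
    IsFractionRing.to_map_ne_zero_of_mem_nonZeroDivisors hg
  obtain ⟨i₀, hi₀⟩ := hr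
  refine ⟨e, ⟨i₀, fun h => ?_⟩, fun k => ?_⟩
  · simpa [h, hg', hi₀] using hmap i₀
  · simp only [← eval_natCast_map, hmap, eval_mul, eval_C, mul_assoc, ← Finset.mul_sum, hu k,
      mul_zero]

theorem mem_confinedSeq_of_integral_recurrence {A : Type*} [CommRing A] [Algebra A L]
    [FaithfulSMul A L] {M : ℕ} {c : Fin (M + 1) → A[X]}
    (hc : ∀ k : ℕ, (c (Fin.last M)).eval (k : A) ≠ 0) {u : ℕ → L}
    (hu : ∀ k : ℕ, ∑ i, algebraMap A L ((c i).eval (k : A)) * u (k + i) = 0) :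
    u ∈ confinedSeq L ∧ ⇑D ∘ u ∈ confinedSeq L := by
  obtain ⟨b, hb⟩ := exists_shift_recurrence (fun i => (c i).map (algebraMap A L))
    (fun k => by
      simpa only [eval_natCast_map, ne_eq, FaithfulSMul.algebraMap_eq_zero_iff] using hc k)
    (u := u) (fun k => by simpa only [eval_natCast_map] using hu k)
  exact mem_confinedSeq_of_shift_recurrence D b hb

theorem pow_mul_derivation_div {m : ℕ} (hm : 2 ≤ m) (p : L) {q : L} (hq : q ≠ 0) :
    q ^ m * D (p / q) = q ^ (m - 2) * (q * D p - p * D q) := by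
  obtain ⟨m, rfl⟩ := Nat.exists_eq_add_of_le' hm
  rw [Derivation.leibniz_div, Nat.add_sub_cancel, smul_eq_mul, smul_eq_mul, smul_eq_mul]
  field_simp
  ring

theorem pow_mul_eval_div (F : L[X]) {m : ℕ} (hm : F.natDegree ≤ m) (p : L) {q : L}
    (hq : q ≠ 0) :
    q ^ m * F.eval (p / q) =
      ∑ j ∈ Finset.range (F.natDegree + 1), F.coeff j * p ^ j * q ^ (m - j) := by
  rw [eval_eq_sum_range, Finset.mul_sum]
  refine Finset.sum_congr rfl fun j hj => ?_
  obtain ⟨n, rfl⟩ := Nat.exists_eq_add_of_le' ((Finset.mem_range_succ_iff.mp hj).trans hm)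
  rw [Nat.add_sub_cancel, div_pow, pow_add]
  field_simp

end PRecursive

open PRecursive

theorem remainder_sequence_is_p_recursive_general {K : Type*} [Field K]
    (D : Derivation K (RatFunc K) (RatFunc K))
    (F : Polynomial (RatFunc K)) (d : ℕ) (hdeg : F.natDegree = d)
    (P Q : ℕ → RatFunc K) (hQ0 : ∀ k, Q k ≠ 0)
    -- the recurrence satisfied by `(P_k)`
    (M : ℕ) (c : Fin (M + 1) → Polynomial (Polynomial K))
    (hc : ∀ k : ℕ, Polynomial.eval ((k : Polynomial K)) (c (Fin.last M)) ≠ 0)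
    (hP : ∀ k : ℕ, ∑ i : Fin (M + 1),
      algebraMap (Polynomial K) (RatFunc K) (Polynomial.eval ((k : Polynomial K)) (c i)) *
        P (k + (i : ℕ)) = 0)
    -- the recurrence satisfied by `(Q_k)`
    (M' : ℕ) (c' : Fin (M' + 1) → Polynomial (Polynomial K))
    (hc' : ∀ k : ℕ, Polynomial.eval ((k : Polynomial K)) (c' (Fin.last M')) ≠ 0)
    (hQ : ∀ k : ℕ, ∑ i : Fin (M' + 1),
      algebraMap (Polynomial K) (RatFunc K) (Polynomial.eval ((k : Polynomial K)) (c' i)) *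
        Q (k + (i : ℕ)) = 0)
    -- the sequence of remainders
    (H : ℕ → RatFunc K)
    (hH : ∀ k, H k = Q k ^ max 2 d *
      (D (P k / Q k) - Polynomial.eval (P k / Q k) F)) :
    ∃ (N : ℕ) (e : Fin (N + 1) → Polynomial (Polynomial K)),
      (∃ i, e i ≠ 0) ∧
      ∀ k : ℕ, ∑ i : Fin (N + 1),
        algebraMap (Polynomial K) (RatFunc K) (Polynomial.eval ((k : Polynomial K)) (e i)) *
          H (k + (i : ℕ)) = 0 := by
  obtain ⟨hPc, hDPc⟩ := mem_confinedSeq_of_integral_recurrence D hc hP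
  obtain ⟨hQc, hDQc⟩ := mem_confinedSeq_of_integral_recurrence D hc' hQ
  have hH' : H = Q ^ (max 2 d - 2) * (Q * (⇑D ∘ P) - P * (⇑D ∘ Q)) -
      ∑ j ∈ Finset.range (F.natDegree + 1),
        (fun _ => F.coeff j) * P ^ j * Q ^ (max 2 d - j) := by
    ext k
    rw [hH, mul_sub, pow_mul_derivation_div D (le_max_left 2 d) _ (hQ0 k),
      pow_mul_eval_div F (hdeg ▸ le_max_right 2 d) _ (hQ0 k)]
    simp
  have hHc : H ∈ confinedSeq (RatFunc K) := hH' ▸ sub_mem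
    (mul_mem (pow_mem hQc _) (sub_mem (mul_mem hQc hDPc) (mul_mem hPc hDQc)))
    (sum_mem fun j _ => mul_mem (mul_mem (const_mem_confinedSeq _) (pow_mem hPc j)) (pow_mem hQc _))
  obtain ⟨N, r, hr, hrec⟩ := exists_recurrence_of_mem_confinedSeq hHc
  exact ⟨N, exists_integral_recurrence hr hrec⟩

/-- **Theorem (linear recurrence for the remainders).**
Let `K` be a field of characteristic zero, `D` the derivation of `K(z)` extending
`d/dz` on `K[z]`, and `F ∈ K(z)[Y]` a polynomial of degree `d > 0` in `Y`.
If `(P_k)` and `(Q_k)` are sequences of rational functions each satisfying a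
nontrivial linear recurrence whose coefficients are polynomials in `k` over `K[z]`
(with leading coefficient nonvanishing at every natural number), `Q_k ≠ 0`, and
`H_k := Q_k^{max(2,d)}·((P_k/Q_k)' − F(P_k/Q_k))`, then `(H_k)` satisfies a
nontrivial linear recurrence with coefficients that are polynomials in `k` over `K[z]`. -/
theorem remainder_sequence_is_p_recursive {K : Type*} [Field K] [CharZero K]
    (D : Derivation K (RatFunc K) (RatFunc K))
    (hD : ∀ p : Polynomial K, D (algebraMap (Polynomial K) (RatFunc K) p) =
      algebraMap (Polynomial K) (RatFunc K) (Polynomial.derivative p))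
    (F : Polynomial (RatFunc K)) (d : ℕ) (hd : 0 < d) (hdeg : F.natDegree = d)
    (P Q : ℕ → RatFunc K) (hQ0 : ∀ k, Q k ≠ 0)
    -- the recurrence satisfied by `(P_k)`
    (M : ℕ) (c : Fin (M + 1) → Polynomial (Polynomial K))
    (hc : ∀ k : ℕ, Polynomial.eval ((k : Polynomial K)) (c (Fin.last M)) ≠ 0)
    (hP : ∀ k : ℕ, ∑ i : Fin (M + 1),
      algebraMap (Polynomial K) (RatFunc K) (Polynomial.eval ((k : Polynomial K)) (c i)) *
        P (k + (i : ℕ)) = 0)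
    -- the recurrence satisfied by `(Q_k)`
    (M' : ℕ) (c' : Fin (M' + 1) → Polynomial (Polynomial K))
    (hc' : ∀ k : ℕ, Polynomial.eval ((k : Polynomial K)) (c' (Fin.last M')) ≠ 0)
    (hQ : ∀ k : ℕ, ∑ i : Fin (M' + 1),
      algebraMap (Polynomial K) (RatFunc K) (Polynomial.eval ((k : Polynomial K)) (c' i)) *
        Q (k + (i : ℕ)) = 0)
    -- the sequence of remainders
    (H : ℕ → RatFunc K)
    (hH : ∀ k, H k = Q k ^ max 2 d *
      (D (P k / Q k) - Polynomial.eval (P k / Q k) F)) :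
    ∃ (N : ℕ) (e : Fin (N + 1) → Polynomial (Polynomial K)),
      (∃ i, e i ≠ 0) ∧
      ∀ k : ℕ, ∑ i : Fin (N + 1),
        algebraMap (Polynomial K) (RatFunc K) (Polynomial.eval ((k : Polynomial K)) (e i)) *
          H (k + (i : ℕ)) = 0 :=
  remainder_sequence_is_p_recursive_general D F d hdeg P Q hQ0 M c hc hP M' c' hc' hQ H hH
end

section
/- Let K be a field equipped with a derivation D (a differential field). Let (a_k), k ≥ 1, be elements of K with D(a_k) ≠ 0 for all k, let f₀, f₁, f₂ be elements of K, and let (P_k) and (Q_k) be sequences in K, both satisfying the recurrence u_{k+2} = u_{k+1} + a_{k+2}·u_k for all k ≥ 0 (with arbitrary initial values). Define H_k := D(P_k)·Q_k − P_k·D(Q_k) − f₀·Q_k² − f₁·P_k·Q_k − f₂·P_k². Then for all k ≥ 3: (1/D(a_{k+1}))·H_{k+1} + (a_k/D(a_k) − (a_{k+1}+1)/D(a_{k+1}))·H_k − (a_k(a_k+1)/D(a_k) + a_{k+1}(a_{k+1}+1)/D(a_{k+1}))·H_{k−1} − ((a_k+1)/D(a_k) − a_{k+1}/D(a_{k+1}))·a_k²·H_{k−2}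 + (a_{k−1}²·a_k²/D(a_k))·H_{k−3} = 0. -/
/-!
Write `v_k = (P_k, Q_k)`. Besides `H_k`, consider the Casoratian `W_k = P_k Q_{k+1} - P_{k+1} Q_k`
and the mixed term `C_k` obtained by polarizing `H` at `v_k, v_{k+1}`. Expanding
`v_{k+2} = v_{k+1} + a_{k+2} v_k` gives the first-order system
`H_{k+2} = H_{k+1} + a_{k+2}² H_k + a_{k+2} C_k + D(a_{k+2}) W_k`,
`C_{k+1} = 2 H_{k+1} + a_{k+2} C_k + D(a_{k+2}) W_k`, `W_{k+1} = -a_{k+2} W_k`.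
The first two equations express `C_{k+1}` through `H` alone, and then `D(a_{k+2}) W_k`
through `H_{k+2}, …, H_{k-1}`. Dividing by `D(a_{k+2})` and inserting the result into
`W_{k+1} = -a_{k+2} W_k` gives the recurrence.
-/

namespace Riccati

section CommRing

variable {R : Type*} [CommRing R] (D : R → R) (f₀ f₁ f₂ : R) (P Q : ℕ → R)

def numerator (k : ℕ) : R :=
  D (P k) * Q k - P k * D (Q k) - f₀ * Q k ^ 2 - f₁ * (P k * Q k) - f₂ * P k ^ 2

/-- The polarization of `numerator` at the consecutive terms `k` and `k + 1`;
on the diagonal `P (k + 1) = P k`, `Q (k + 1) = Q k` it is twice `numerator`. -/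
def cross (k : ℕ) : R :=
  D (P (k + 1)) * Q k - P k * D (Q (k + 1)) + D (P k) * Q (k + 1) - P (k + 1) * D (Q k)
    - 2 * f₀ * Q k * Q (k + 1) - f₁ * (P k * Q (k + 1) + P (k + 1) * Q k)
    - 2 * f₂ * P k * P (k + 1)

def casoratian (k : ℕ) : R := P k * Q (k + 1) - P (k + 1) * Q k

variable {D} {a : ℕ → R}

theorem casoratian_succ (hP : ∀ k, P (k + 2) = P (k + 1) + a (k + 2) * P k)
    (hQ : ∀ k, Q (k + 2) = Q (k + 1) + a (k + 2) * Q k) (k : ℕ) :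
    casoratian P Q (k + 1) = -a (k + 2) * casoratian P Q k := by
  simp only [casoratian, hP, hQ]
  ring

variable (hDadd : ∀ x y, D (x + y) = D x + D y) (hDmul : ∀ x y, D (x * y) = D x * y + x * D y)
include hDadd hDmul

variable {P Q} (hP : ∀ k, P (k + 2) = P (k + 1) + a (k + 2) * P k)
  (hQ : ∀ k, Q (k + 2) = Q (k + 1) + a (k + 2) * Q k)
include hP hQ

theorem numerator_add_two (k : ℕ) :
    numerator D f₀ f₁ f₂ P Q (k + 2) = numerator D f₀ f₁ f₂ P Q (k + 1)
      + a (k + 2) ^ 2 * numerator D f₀ f₁ f₂ P Q k + a (k + 2) * cross D f₀ f₁ f₂ P Q k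
      + D (a (k + 2)) * casoratian P Q k := by
  simp only [numerator, cross, casoratian, hP, hQ, hDadd, hDmul]
  ring

theorem cross_succ (k : ℕ) :
    cross D f₀ f₁ f₂ P Q (k + 1) = 2 * numerator D f₀ f₁ f₂ P Q (k + 1)
      + a (k + 2) * cross D f₀ f₁ f₂ P Q k + D (a (k + 2)) * casoratian P Q k := by
  simp only [numerator, cross, casoratian, hP, hQ, hDadd, hDmul]
  ring

theorem cross_succ_eq_numerator (k : ℕ) :
    cross D f₀ f₁ f₂ P Q (k + 1) = numerator D f₀ f₁ f₂ P Q (k + 2)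
      + numerator D f₀ f₁ f₂ P Q (k + 1) - a (k + 2) ^ 2 * numerator D f₀ f₁ f₂ P Q k := by
  rw [cross_succ f₀ f₁ f₂ hDadd hDmul hP hQ, numerator_add_two f₀ f₁ f₂ hDadd hDmul hP hQ]
  ring

theorem deriv_mul_casoratian (k : ℕ) :
    D (a (k + 3)) * casoratian P Q (k + 1) = numerator D f₀ f₁ f₂ P Q (k + 3)
      - (a (k + 3) + 1) * numerator D f₀ f₁ f₂ P Q (k + 2)
      - a (k + 3) * (a (k + 3) + 1) * numerator D f₀ f₁ f₂ P Q (k + 1)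
      + a (k + 3) * a (k + 2) ^ 2 * numerator D f₀ f₁ f₂ P Q k := by
  rw [numerator_add_two f₀ f₁ f₂ hDadd hDmul hP hQ (k + 1),
    cross_succ_eq_numerator f₀ f₁ f₂ hDadd hDmul hP hQ]
  ring

end CommRing

theorem casoratian_eq_div {K : Type*} [Field K] {D : K → K} (f₀ f₁ f₂ : K) {a P Q : ℕ → K}
    (hDadd : ∀ x y, D (x + y) = D x + D y) (hDmul : ∀ x y, D (x * y) = D x * y + x * D y)
    (hP : ∀ k, P (k + 2) = P (k + 1) + a (k + 2) * P k)
    (hQ : ∀ k, Q (k + 2) = Q (k + 1) + a (k + 2) * Q k) {k : ℕ} (hk : D (a (k + 3)) ≠ 0) :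
    casoratian P Q (k + 1) = (numerator D f₀ f₁ f₂ P Q (k + 3)
      - (a (k + 3) + 1) * numerator D f₀ f₁ f₂ P Q (k + 2)
      - a (k + 3) * (a (k + 3) + 1) * numerator D f₀ f₁ f₂ P Q (k + 1)
      + a (k + 3) * a (k + 2) ^ 2 * numerator D f₀ f₁ f₂ P Q k) / D (a (k + 3)) := by
  rw [eq_div_iff hk, mul_comm, deriv_mul_casoratian f₀ f₁ f₂ hDadd hDmul hP hQ]

end Riccati

open Riccati in
/-- **Proposition (explicit recurrence for Riccati remainders).**
In a differential field `(K, D)`, if `(P_k)` and `(Q_k)` both satisfy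
`u_{k+2} = u_{k+1} + a_{k+2}·u_k` and
`H_k := D(P_k)·Q_k − P_k·D(Q_k) − f₀·Q_k² − f₁·P_k·Q_k − f₂·P_k²`
(the numerator of the Riccati remainder for `F(Y) = f₀ + f₁Y + f₂Y²`), with
`D(a_k) ≠ 0` for all `k ≥ 1`, then `(H_k)` satisfies the stated fourth-order
linear recurrence, whose coefficients do not depend on `f₀, f₁, f₂`. -/
theorem riccati_remainder_recurrence {K : Type*} [Field K]
    (D : K → K)
    (hDadd : ∀ x y : K, D (x + y) = D x + D y)
    (hDmul : ∀ x y : K, D (x * y) = D x * y + x * D y)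
    (a : ℕ → K) (ha : ∀ k ≥ 1, D (a k) ≠ 0)
    (f₀ f₁ f₂ : K)
    (P Q : ℕ → K)
    (hP : ∀ k : ℕ, P (k + 2) = P (k + 1) + a (k + 2) * P k)
    (hQ : ∀ k : ℕ, Q (k + 2) = Q (k + 1) + a (k + 2) * Q k)
    (H : ℕ → K)
    (hH : ∀ k, H k = D (P k) * Q k - P k * D (Q k)
      - f₀ * Q k ^ 2 - f₁ * (P k * Q k) - f₂ * P k ^ 2) :
    ∀ k ≥ 3,
      (1 / D (a (k + 1))) * H (k + 1)
        + (a k / D (a k) - (a (k + 1) + 1) / D (a (k + 1))) * H k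
        - (a k * (a k + 1) / D (a k) + a (k + 1) * (a (k + 1) + 1) / D (a (k + 1))) * H (k - 1)
        - ((a k + 1) / D (a k) - a (k + 1) / D (a (k + 1))) * a k ^ 2 * H (k - 2)
        + a (k - 1) ^ 2 * a k ^ 2 / D (a k) * H (k - 3) = 0 := by
  obtain rfl : H = numerator D f₀ f₁ f₂ P Q := funext hH
  rintro k hk
  obtain ⟨m, rfl⟩ := Nat.exists_eq_add_of_le' hk
  have hW₁ := casoratian_eq_div f₀ f₁ f₂ hDadd hDmul hP hQ (k := m) (ha (m + 3) (by omega))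
  have hW₂ := casoratian_eq_div f₀ f₁ f₂ hDadd hDmul hP hQ (k := m + 1) (ha (m + 4) (by omega))
  have hW := casoratian_succ P Q hP hQ (m + 1)
  rw [show m + 3 - 1 = m + 2 by omega, show m + 3 - 2 = m + 1 by omega, Nat.add_sub_cancel]
  linear_combination hW - hW₂ - a (m + 3) * hW₁
end

section
/- Let K be a field equipped with a derivation D. Let (a_k) and (b_k), k ≥ 1, be elements of K with b_k ≠ 0 for all k, and let (P_k) and (Q_k) be sequences in K, both satisfying the recurrence u_{k+2} = b_{k+2}·u_{k+1} + a_{k+2}·u_k for all k ≥ 0. Define ã_1 := a_1/b_1 and ã_k := a_k/(b_k·b_{k−1}) for k ≥ 2, and set P̃_k := P_k/(b_1·b_2⋯b_k) and Q̃_k := Q_k/(b_1·b_2⋯b_k). Then both (P̃_k) and (Q̃_k) satisfy the recurrence u_{k+2} = u_{k+1} + ã_{k+2}·u_k for all k ≥ 0, and consequently, if moreover D(ã_k) ≠ 0 for all k and f₀, f₁, f₂ ∈ K, the sequence H̃_k := D(P̃_k)·Q̃_k − P̃_k·D(Q̃_k) − f₀·Q̃_k² − f₁·P̃_k·Q̃_k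 − f₂·P̃_k² satisfies, for all k ≥ 3: (1/D(ã_{k+1}))·H̃_{k+1} + (ã_k/D(ã_k) − (ã_{k+1}+1)/D(ã_{k+1}))·H̃_k − (ã_k(ã_k+1)/D(ã_k) + ã_{k+1}(ã_{k+1}+1)/D(ã_{k+1}))·H̃_{k−1} − ((ã_k+1)/D(ã_k) − ã_{k+1}/D(ã_{k+1}))·ã_k²·H̃_{k−2} + (ã_{k−1}²·ã_k²/D(ã_k))·H̃_{k−3} = 0. -/
/-!
Dividing by `b₁⋯b_k` turns the recurrence into `u_{k+2} = u_{k+1} + ã_{k+2} u_k`. For such a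
recurrence the fourth-order operator factors as
`L h_k = A h_k / D ã_{k+1} + ã_k · A h_{k-1} / D ã_k` through the third-order operator `A` of the
symmetric square, which kills every product `u_k v_k` of two solutions, hence the quadratic part
of `H̃`. On the Wronskian part `D(P̃) Q̃ - P̃ D(Q̃)`, `A` only sees the derivatives of the
coefficients and returns `D ã_{k+1} · ã_k` times the Casoratian `C_{k-1}`; since
`C_k = -ã_k C_{k-1}`, the two terms of `L` cancel.
-/

open Finset

section Normalization

variable {K : Type*} [Field K]

theorem div_prod_Icc_recurrence {a b u : ℕ → K} (hb : ∀ k ≥ 1, b k ≠ 0)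
    (hu : ∀ k, u (k + 2) = b (k + 2) * u (k + 1) + a (k + 2) * u k) (k : ℕ) :
    u (k + 2) / ∏ i ∈ Icc 1 (k + 2), b i
      = u (k + 1) / ∏ i ∈ Icc 1 (k + 1), b i
        + a (k + 2) / (b (k + 2) * b (k + 1)) * (u k / ∏ i ∈ Icc 1 k, b i) := by
  have hprod : ∏ i ∈ Icc 1 k, b i ≠ 0 :=
    prod_ne_zero_iff.mpr fun i hi => hb i (mem_Icc.mp hi).1
  have hb1 := hb (k + 1) (by omega)
  have hb2 := hb (k + 2) (by omega)
  rw [prod_Icc_succ_top (by omega : 1 ≤ k + 2), prod_Icc_succ_top (by omega : 1 ≤ k + 1), hu]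
  field_simp

end Normalization

section SymmetricSquare

variable {R : Type*} [CommRing R] {t u v : ℕ → R}

/-- The operator of the symmetric square of `u_{k+2} = u_{k+1} + t_{k+2} u_k`. -/
def symmSqOp (t h : ℕ → R) (n : ℕ) : R :=
  h (n + 3) - (t (n + 3) + 1) * h (n + 2) - t (n + 3) * (t (n + 3) + 1) * h (n + 1)
    + t (n + 3) * t (n + 2) ^ 2 * h n

def casoratian (u v : ℕ → R) (n : ℕ) : R :=
  u (n + 1) * v n - u n * v (n + 1)

theorem casoratian_succ (hu : ∀ n, u (n + 2) = u (n + 1) + t (n + 2) * u n)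
    (hv : ∀ n, v (n + 2) = v (n + 1) + t (n + 2) * v n) (n : ℕ) :
    casoratian u v (n + 1) = -t (n + 2) * casoratian u v n := by
  simp only [casoratian, hu, hv]
  ring

theorem symmSqOp_mul (hu : ∀ n, u (n + 2) = u (n + 1) + t (n + 2) * u n)
    (hv : ∀ n, v (n + 2) = v (n + 1) + t (n + 2) * v n) (n : ℕ) :
    symmSqOp t (fun k => u k * v k) n = 0 := by
  simp only [symmSqOp, hu, hv]
  ring

theorem symmSqOp_wronskian {D : R → R} (hDadd : ∀ x y, D (x + y) = D x + D y)
    (hDmul : ∀ x y, D (x * y) = D x * y + x * D y)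
    (hu : ∀ n, u (n + 2) = u (n + 1) + t (n + 2) * u n)
    (hv : ∀ n, v (n + 2) = v (n + 1) + t (n + 2) * v n) (n : ℕ) :
    symmSqOp t (fun k => D (u k) * v k - u k * D (v k)) n
      = D (t (n + 3)) * t (n + 2) * casoratian u v n := by
  have hD : ∀ w : ℕ → R, (∀ n, w (n + 2) = w (n + 1) + t (n + 2) * w n) → ∀ n,
      D (w (n + 2)) = D (w (n + 1)) + (D (t (n + 2)) * w n + t (n + 2) * D (w n)) := by
    intro w hw n
    rw [hw, hDadd, hDmul]
  simp only [symmSqOp, casoratian, hD u hu, hD v hv]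
  simp only [hu, hv]
  ring

end SymmetricSquare

section Riccati

variable {K : Type*} [Field K]

/-- The fourth-order operator of the theorem at `k = m + 3`, factored through `symmSqOp`. -/
def riccatiOp (D : K → K) (t h : ℕ → K) (m : ℕ) : K :=
  symmSqOp t h (m + 1) / D (t (m + 4)) + t (m + 3) * symmSqOp t h m / D (t (m + 3))

theorem riccatiOp_eq_zero {D : K → K} {t u v h : ℕ → K} (hDt : ∀ k ≥ 1, D (t k) ≠ 0)
    (hu : ∀ n, u (n + 2) = u (n + 1) + t (n + 2) * u n)
    (hv : ∀ n, v (n + 2) = v (n + 1) + t (n + 2) * v n)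
    (hh : ∀ n, symmSqOp t h n = D (t (n + 3)) * t (n + 2) * casoratian u v n) (m : ℕ) :
    riccatiOp D t h m = 0 := by
  have h3 := hDt (m + 3) (by omega)
  have h4 := hDt (m + 4) (by omega)
  rw [riccatiOp, hh, hh, casoratian_succ hu hv]
  field_simp
  ring

end Riccati

theorem riccati_remainder_recurrence_general_general {K : Type*} [Field K]
    (D : K → K)
    (hDadd : ∀ x y : K, D (x + y) = D x + D y)
    (hDmul : ∀ x y : K, D (x * y) = D x * y + x * D y)
    (a b : ℕ → K) (hb : ∀ k ≥ 1, b k ≠ 0)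
    (P Q : ℕ → K)
    (hP : ∀ k : ℕ, P (k + 2) = b (k + 2) * P (k + 1) + a (k + 2) * P k)
    (hQ : ∀ k : ℕ, Q (k + 2) = b (k + 2) * Q (k + 1) + a (k + 2) * Q k)
    (ta : ℕ → K)
    (hta : ∀ k ≥ 2, ta k = a k / (b k * b (k - 1)))
    (tP tQ : ℕ → K)
    (htP : ∀ k : ℕ, tP k = P k / ∏ i ∈ Finset.Icc 1 k, b i)
    (htQ : ∀ k : ℕ, tQ k = Q k / ∏ i ∈ Finset.Icc 1 k, b i) :
    (∀ k : ℕ, tP (k + 2) = tP (k + 1) + ta (k + 2) * tP k) ∧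
    (∀ k : ℕ, tQ (k + 2) = tQ (k + 1) + ta (k + 2) * tQ k) ∧
    (∀ (_ : ∀ k ≥ 1, D (ta k) ≠ 0) (f₀ f₁ f₂ : K) (tH : ℕ → K),
      (∀ k, tH k = D (tP k) * tQ k - tP k * D (tQ k)
        - f₀ * tQ k ^ 2 - f₁ * (tP k * tQ k) - f₂ * tP k ^ 2) →
      ∀ k ≥ 3,
        (1 / D (ta (k + 1))) * tH (k + 1)
          + (ta k / D (ta k) - (ta (k + 1) + 1) / D (ta (k + 1))) * tH k
          - (ta k * (ta k + 1) / D (ta k)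
              + ta (k + 1) * (ta (k + 1) + 1) / D (ta (k + 1))) * tH (k - 1)
          - ((ta k + 1) / D (ta k) - ta (k + 1) / D (ta (k + 1))) * ta k ^ 2 * tH (k - 2)
          + ta (k - 1) ^ 2 * ta k ^ 2 / D (ta k) * tH (k - 3) = 0) := by
  have hta' (k : ℕ) : ta (k + 2) = a (k + 2) / (b (k + 2) * b (k + 1)) := hta (k + 2) (by omega)
  have hP' (k : ℕ) : tP (k + 2) = tP (k + 1) + ta (k + 2) * tP k := by
    simpa only [htP, hta'] using div_prod_Icc_recurrence hb hP k
  have hQ' (k : ℕ) : tQ (k + 2) = tQ (k + 1) + ta (k + 2) * tQ k := by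
    simpa only [htQ, hta'] using div_prod_Icc_recurrence hb hQ k
  refine ⟨hP', hQ', fun hDta f₀ f₁ f₂ tH htH k hk => ?_⟩
  have hsymm (n : ℕ) : symmSqOp ta tH n = D (ta (n + 3)) * ta (n + 2) * casoratian tP tQ n := by
    have hW := symmSqOp_wronskian hDadd hDmul hP' hQ' n
    have hQQ := symmSqOp_mul hQ' hQ' n
    have hPQ := symmSqOp_mul hP' hQ' n
    have hPP := symmSqOp_mul hP' hP' n
    simp only [symmSqOp, htH] at hW hQQ hPQ hPP ⊢
    linear_combination hW - f₀ * hQQ - f₁ * hPQ - f₂ * hPP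
  obtain ⟨m, rfl⟩ : ∃ m, k = m + 3 := ⟨k - 3, by omega⟩
  have hzero := riccatiOp_eq_zero hDta hP' hQ' hsymm m
  simp only [riccatiOp, symmSqOp] at hzero
  simp only [show m + 3 - 1 = m + 2 from rfl, show m + 3 - 2 = m + 1 from rfl,
    show m + 3 - 3 = m from rfl]
  linear_combination hzero

/-- **Corollary (reduction to a regular continued fraction).**
If `(P_k)` and `(Q_k)` satisfy `u_{k+2} = b_{k+2}·u_{k+1} + a_{k+2}·u_k` with all
`b_k ≠ 0`, then the normalized sequences `P̃_k := P_k/(b₁⋯b_k)`, `Q̃_k := Q_k/(b₁⋯b_k)`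
satisfy `u_{k+2} = u_{k+1} + ã_{k+2}·u_k` where `ã₁ = a₁/b₁` and
`ã_k = a_k/(b_k·b_{k−1})` for `k ≥ 2`; consequently, when `D(ã_k) ≠ 0` for all
`k ≥ 1`, the corresponding remainders `H̃_k` satisfy the fourth-order recurrence of
the Riccati proposition with `a` replaced by `ã`. -/
theorem riccati_remainder_recurrence_general {K : Type*} [Field K]
    (D : K → K)
    (hDadd : ∀ x y : K, D (x + y) = D x + D y)
    (hDmul : ∀ x y : K, D (x * y) = D x * y + x * D y)
    (a b : ℕ → K) (hb : ∀ k ≥ 1, b k ≠ 0)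
    (P Q : ℕ → K)
    (hP : ∀ k : ℕ, P (k + 2) = b (k + 2) * P (k + 1) + a (k + 2) * P k)
    (hQ : ∀ k : ℕ, Q (k + 2) = b (k + 2) * Q (k + 1) + a (k + 2) * Q k)
    (ta : ℕ → K)
    (hta1 : ta 1 = a 1 / b 1)
    (hta : ∀ k ≥ 2, ta k = a k / (b k * b (k - 1)))
    (tP tQ : ℕ → K)
    (htP : ∀ k : ℕ, tP k = P k / ∏ i ∈ Finset.Icc 1 k, b i)
    (htQ : ∀ k : ℕ, tQ k = Q k / ∏ i ∈ Finset.Icc 1 k, b i) :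
    (∀ k : ℕ, tP (k + 2) = tP (k + 1) + ta (k + 2) * tP k) ∧
    (∀ k : ℕ, tQ (k + 2) = tQ (k + 1) + ta (k + 2) * tQ k) ∧
    (∀ (_ : ∀ k ≥ 1, D (ta k) ≠ 0) (f₀ f₁ f₂ : K) (tH : ℕ → K),
      (∀ k, tH k = D (tP k) * tQ k - tP k * D (tQ k)
        - f₀ * tQ k ^ 2 - f₁ * (tP k * tQ k) - f₂ * tP k ^ 2) →
      ∀ k ≥ 3,
        (1 / D (ta (k + 1))) * tH (k + 1)
          + (ta k / D (ta k) - (ta (k + 1) + 1) / D (ta (k + 1))) * tH k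
          - (ta k * (ta k + 1) / D (ta k)
              + ta (k + 1) * (ta (k + 1) + 1) / D (ta (k + 1))) * tH (k - 1)
          - ((ta k + 1) / D (ta k) - ta (k + 1) / D (ta (k + 1))) * ta k ^ 2 * tH (k - 2)
          + ta (k - 1) ^ 2 * ta k ^ 2 / D (ta k) * tH (k - 3) = 0) :=
  riccati_remainder_recurrence_general_general D hDadd hDmul a b hb P Q hP hQ ta hta tP tQ htP htQ
end

section
/- Let K be a field of characteristic zero, let ℓ ≥ 1 be an integer, and let u : ℕ → K be a sequence. Then u is P-recursive if and only if, for every j in {0, 1, …, ℓ−1}, the section k ↦ u(ℓk + j) is P-recursive. -/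
/-- A sequence `u : ℕ → K` is P-recursive if it satisfies a nontrivial linear
recurrence with polynomial coefficients. -/
def IsPRecursive {K : Type*} [Field K] (u : ℕ → K) : Prop :=
  ∃ (r : ℕ) (p : Fin (r + 1) → Polynomial K),
    (∃ i, p i ≠ 0) ∧
    ∀ n : ℕ, ∑ i : Fin (r + 1), Polynomial.eval (n : K) (p i) * u (n + (i : ℕ)) = 0

/-!
Say that `w` lies in the rational span of sequences `z i` on a set `s` if
`B(n) w(n) = ∑ i, A_i(n) z_i(n)` for `n ∈ s`, with polynomials `A_i` and `B ≠ 0`.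
If `u` satisfies a recurrence of order `r` with nonzero leading coefficient, every shift
`u(n + s)` lies in the rational span of `u(n), …, u(n + r - 1)`, and this is stable under the
substitutions `n ↦ ℓk` and `n = ℓk + c ↦ k`. Conversely, if on each of finitely many classes
the shifts of `u` lie in the rational span of one finite family, then more shifts than
`#classes * #family` are linearly dependent over `K[X]`, and clearing denominators gives a
recurrence for `u`. Both directions of the theorem are instances of this, with the residues
mod `ℓ` as classes for the converse.
-/

open Polynomial Finset

section
variable {K : Type*} [Field K]

/-- The denominator `B` is cleared rather than inverted, since it may vanish at points of `s`. -/
def InRatSpanOn {ι : Type*} [Fintype ι] (s : Set ℕ) (z : ι → ℕ → K) (w : ℕ → K) : Prop :=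
  ∃ B : K[X], B ≠ 0 ∧ ∃ A : ι → K[X],
    ∀ n ∈ s, B.eval (n : K) * w n = ∑ i, (A i).eval (n : K) * z i n

namespace InRatSpanOn
variable {ι κ : Type*} [Fintype ι] [Fintype κ] {s t : Set ℕ} {z : ι → ℕ → K} {w w' : ℕ → K}

theorem mono (h : InRatSpanOn s z w) (hts : t ⊆ s) : InRatSpanOn t z w := by
  obtain ⟨B, hB, A, hA⟩ := h
  exact ⟨B, hB, A, fun n hn => hA n (hts hn)⟩

theorem congr (h : InRatSpanOn s z w) (hw : Set.EqOn w w' s) : InRatSpanOn s z w' := by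
  obtain ⟨B, hB, A, hA⟩ := h
  exact ⟨B, hB, A, fun n hn => hw hn ▸ hA n hn⟩

theorem trans {y : κ → ℕ → K} (h : InRatSpanOn s y w) (hy : ∀ k, InRatSpanOn s z (y k)) :
    InRatSpanOn s z w := by
  classical
  obtain ⟨B, hB, A, hA⟩ := h
  choose C hC D hD using hy
  refine ⟨B * ∏ k, C k, mul_ne_zero hB (prod_ne_zero_iff.2 fun k _ => hC k),
    fun i => ∑ k, A k * D k i * ∏ k' ∈ univ.erase k, C k', fun n hn => ?_⟩
  calc (B * ∏ k, C k).eval (n : K) * w n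
      = ∑ k, (A k).eval (n : K) * (∏ k' ∈ univ.erase k, C k').eval (n : K)
          * ((C k).eval (n : K) * y k n) := by
        rw [eval_mul, mul_right_comm, mul_comm, hA n hn, mul_sum]
        refine sum_congr rfl fun k _ => ?_
        rw [← mul_prod_erase univ C (mem_univ k), eval_mul]
        ring
    _ = ∑ i, (∑ k, A k * D k i * ∏ k' ∈ univ.erase k, C k').eval (n : K) * z i n := by
        simp only [hD _ n hn, eval_finsetSum, eval_mul, mul_sum, sum_mul]
        rw [sum_comm]
        exact sum_congr rfl fun _ _ => sum_congr rfl fun _ _ => by ring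

theorem comp {L : K[X]} (hL : 0 < L.natDegree) {f : ℕ → ℕ}
    (hf : ∀ n ∈ t, L.eval (n : K) = f n) (hft : Set.MapsTo f t s) (h : InRatSpanOn s z w) :
    InRatSpanOn t (fun i => z i ∘ f) (w ∘ f) := by
  obtain ⟨B, hB, A, hA⟩ := h
  refine ⟨B.comp L, fun hBL => ?_, fun i => (A i).comp L, fun n hn => ?_⟩
  · rcases comp_eq_zero_iff.1 hBL with hB0 | ⟨-, hLC⟩
    · exact hB hB0
    · rw [hLC, natDegree_C] at hL
      exact hL.false
  · simp only [eval_comp, hf n hn, Function.comp_apply]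
    exact hA _ (hft hn)

end InRatSpanOn

theorem inRatSpanOn_apply {ι : Type*} [Fintype ι] (s : Set ℕ) (z : ι → ℕ → K) (i : ι) :
    InRatSpanOn s z (z i) := by
  classical
  exact ⟨1, one_ne_zero, Pi.single i 1, fun n _ => by
    simp [Pi.single_apply, apply_ite (eval _), ite_mul]⟩

theorem IsPRecursive.exists_last_ne_zero {u : ℕ → K} (hu : IsPRecursive u) :
    ∃ (r : ℕ) (p : Fin (r + 1) → K[X]), p (Fin.last r) ≠ 0 ∧
      ∀ n : ℕ, ∑ i : Fin (r + 1), (p i).eval (n : K) * u (n + i) = 0 := by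
  obtain ⟨r, p, hp, hrec⟩ := hu
  induction r with
  | zero =>
    obtain ⟨i, hi⟩ := hp
    exact ⟨0, p, Subsingleton.elim (α := Fin 1) i (Fin.last 0) ▸ hi, hrec⟩
  | succ r ih =>
    by_cases hlast : p (Fin.last (r + 1)) = 0
    · refine ih (p ∘ Fin.castSucc) ?_ fun n => ?_
      · obtain ⟨i, hi⟩ := hp
        obtain ⟨j, rfl⟩ | rfl := Fin.eq_castSucc_or_eq_last i
        exacts [⟨j, hi⟩, absurd hlast hi]
      · simpa [Fin.sum_univ_castSucc, hlast] using hrec n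
    · exact ⟨r + 1, p, hlast, hrec⟩

theorem IsPRecursive.exists_inRatSpanOn_shift {u : ℕ → K} (hu : IsPRecursive u) :
    ∃ r : ℕ, ∀ s : ℕ,
      InRatSpanOn Set.univ (fun (i : Fin r) n => u (n + i)) (fun n => u (n + s)) := by
  obtain ⟨r, p, hp, hrec⟩ := hu.exists_last_ne_zero
  have hle : ∀ s ≤ r,
      InRatSpanOn Set.univ (fun (i : Fin r) n => u (n + i)) (fun n => u (n + s)) := by
    intro s hs
    rcases hs.lt_or_eq with hs | rfl
    · exact inRatSpanOn_apply _ (fun (i : Fin r) n => u (n + i)) ⟨s, hs⟩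
    · refine ⟨p (Fin.last s), hp, fun i => -p i.castSucc, fun n _ => ?_⟩
      have := hrec n
      rw [Fin.sum_univ_castSucc] at this
      simp only [eval_neg, neg_mul, sum_neg_distrib, Fin.val_castSucc, Fin.val_last] at this ⊢
      linear_combination this
  refine ⟨r, fun s => ?_⟩
  induction s with
  | zero => exact hle 0 r.zero_le
  | succ s ih =>
    have hshift := ih.comp (L := X + C 1) (f := (· + 1)) (t := Set.univ)
      (by rw [natDegree_X_add_C]; exact one_pos) (by simp) (Set.mapsTo_univ _ _)
    refine (hshift.trans fun i => (hle (i + 1) i.isLt).congr fun n _ => ?_).congr fun n _ => ?_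
    all_goals simp only [Function.comp_apply]; ring_nf

theorem IsPRecursive.of_inRatSpanOn {κ ι : Type*} [Fintype κ] [Fintype ι] {u : ℕ → K}
    (cls : ℕ → κ) (z : ι → ℕ → K)
    (h : ∀ s c, InRatSpanOn {n | cls n = c} z (fun n => u (n + s))) : IsPRecursive u := by
  classical
  set r := Fintype.card (κ × ι)
  choose B hB A hA using fun (s : Fin (r + 1)) c => h s c
  -- `E s c * A s c d = (∏ s', B s' c) * (A s c d / B s c)`: the rows `A s c / B s c` with their
  -- denominators cleared. There are more rows than columns, hence a `K[X]`-relation.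
  set E : Fin (r + 1) → κ → K[X] := fun s c => ∏ s' ∈ univ.erase s, B s' c
  have hdep : ¬ LinearIndependent K[X] (fun s (cd : κ × ι) => E s cd.1 * A s cd.1 cd.2) :=
    fun hli => by simpa [r] using hli.fintype_card_le_finrank
  obtain ⟨q, hq, s₀, hs₀⟩ := Fintype.not_linearIndependent_iff.1 hdep
  set P := ∏ c, ∏ s, B s c
  have hP : P ≠ 0 := prod_ne_zero_iff.2 fun c _ => prod_ne_zero_iff.2 fun s _ => hB s c
  refine ⟨r, fun s => q s * P, ⟨s₀, mul_ne_zero hs₀ hP⟩, fun n => ?_⟩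
  set c := cls n
  have hrel (d : ι) : ∑ s, (q s * E s c * A s c d).eval (n : K) = 0 := by
    simpa [mul_assoc, eval_finsetSum] using congrArg (eval (n : K)) (congrFun hq (c, d))
  set F := ∏ c' ∈ univ.erase c, ∏ s, B s c'
  calc ∑ s, (q s * P).eval (n : K) * u (n + s)
      = ∑ s, (F * q s * E s c).eval (n : K) * ((B s c).eval (n : K) * u (n + s)) := by
        refine sum_congr rfl fun s _ => ?_
        have hPF : P = (∏ s', B s' c) * F := (mul_prod_erase _ _ (mem_univ c)).symm
        rw [hPF, ← mul_prod_erase univ (B · c) (mem_univ s)]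
        simp only [eval_mul, E]
        ring
    _ = F.eval (n : K) * ∑ d, (∑ s, (q s * E s c * A s c d).eval (n : K)) * z d n := by
        simp only [hA _ c n rfl, eval_mul, mul_sum, sum_mul]
        rw [sum_comm]
        exact sum_congr rfl fun _ _ => sum_congr rfl fun _ _ => by ring
    _ = 0 := by simp only [hrel, zero_mul, sum_const_zero, mul_zero]

theorem IsPRecursive.comp_mul_add {u : ℕ → K} (hu : IsPRecursive u) {ℓ : ℕ}
    (hℓ : (ℓ : K) ≠ 0) (j : ℕ) : IsPRecursive (fun k => u (ℓ * k + j)) := by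
  obtain ⟨r, hr⟩ := hu.exists_inRatSpanOn_shift
  refine IsPRecursive.of_inRatSpanOn (fun _ => ()) (fun (i : Fin r) k => u (ℓ * k + i))
    fun m _ => ?_
  have hsec := (hr (ℓ * m + j)).comp (L := C (ℓ : K) * X) (f := (ℓ * ·)) (t := Set.univ)
    (by rw [natDegree_C_mul_X _ hℓ]; exact one_pos) (by simp) (Set.mapsTo_univ _ _)
  refine (hsec.congr fun k _ => ?_).mono (Set.subset_univ _)
  simp only [Function.comp_apply]
  ring_nf

theorem IsPRecursive.of_forall_comp_mul_add {u : ℕ → K} {ℓ : ℕ} (hℓ : (ℓ : K) ≠ 0)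
    (h : ∀ j < ℓ, IsPRecursive (fun k => u (ℓ * k + j))) : IsPRecursive u := by
  have : NeZero ℓ := ⟨by rintro rfl; simp at hℓ⟩
  choose r hr using fun j : Fin ℓ => (h j j.isLt).exists_inRatSpanOn_shift
  let z : (Σ j : Fin ℓ, Fin (r j)) → ℕ → K := fun je n => u (ℓ * (n / ℓ + je.2) + je.1)
  refine IsPRecursive.of_inRatSpanOn (Fin.ofNat ℓ) z fun s c => ?_
  have hc : ∀ n ∈ {n | Fin.ofNat ℓ n = c}, n % ℓ = c := fun n hn => by
    simpa [Fin.ext_iff] using hn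
  -- for `n ≡ c`, `u (n + s)` is the section `(c + s) % ℓ` read at `n / ℓ + (c + s) / ℓ`
  have hsec := (hr (Fin.ofNat ℓ (c + s)) ((c + s) / ℓ)).comp
    (L := C (ℓ⁻¹ : K) * (X - C (c : K))) (f := (· / ℓ)) (t := {n | Fin.ofNat ℓ n = c})
    ?_ ?_ (Set.mapsTo_univ _ _)
  · refine (hsec.trans fun e => inRatSpanOn_apply _ z ⟨_, e⟩).congr fun n hn => ?_
    have := hc n hn
    have := Nat.div_add_mod n ℓ
    have := Nat.div_add_mod (c + s) ℓ
    simp only [Function.comp_apply, Fin.val_ofNat]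
    congr 1
    rw [Nat.mul_add]
    omega
  · rw [natDegree_C_mul (inv_ne_zero hℓ), natDegree_X_sub_C]
    exact one_pos
  · intro n hn
    have hdiv : (n : K) = ℓ * ((n / ℓ : ℕ) : K) + c := by
      rw [← hc n hn]
      exact_mod_cast congrArg (Nat.cast (R := K)) (Nat.div_add_mod n ℓ).symm
    rw [eval_mul, eval_C, eval_sub, eval_X, eval_C, hdiv]
    field_simp
    ring

end

/-- **Lemma (sections of P-recursive sequences).**
For `ℓ ≥ 1`, a sequence `u` is P-recursive if and only if each of its `ℓ` sections
`k ↦ u(ℓk + j)`, `0 ≤ j < ℓ`, is P-recursive. -/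
theorem isPRecursive_iff_sections {K : Type*} [Field K] [CharZero K]
    (ℓ : ℕ) (hℓ : 1 ≤ ℓ) (u : ℕ → K) :
    IsPRecursive u ↔ ∀ j < ℓ, IsPRecursive (fun k => u (ℓ * k + j)) := by
  have hℓK : (ℓ : K) ≠ 0 := Nat.cast_ne_zero.2 (by omega)
  exact ⟨fun hu j _ => hu.comp_mul_add hℓK j, IsPRecursive.of_forall_comp_mul_add hℓK⟩
end

section
/- Let K be a field. Let A = Σ_{i=0}^{M} a_i(x)·Sⁱ and C = Σ_{j=0}^{m} c_j(x)·Sʲ be linear recurrence operators with polynomial coefficients a_i, c_j ∈ K[x] and c_m ≠ 0, with m ≤ M, and let B = Σ_{t=0}^{M−m} b_t(x)·Sᵗ be a recurrence operator with rational function coefficients b_t ∈ K(x) such that A = B·C, where multiplication of operators obeys the commutation rule S·r(x) = r(x+1)·S, equivalently a_i(x) = Σ_t b_t(x)·c_{i−t}(x+t) for all i. Then every element α of K that is a root of the denominator of some b_t satisfies c_m(α + s) = 0 for some s ∈ {0, 1, …, M−m}. -/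
/-!
Fix `α` with `c_m(α + s) ≠ 0` for all `s ≤ M - m`; we show that every `b_t` is regular at
`α`, i.e. its denominator does not vanish there. Rational functions regular at `α` form a subring
of `K(x)` containing `K[x]` and the inverses of polynomials not vanishing at `α`. Comparing the
coefficients of `S^(m+t)` in `A = B·C` gives
`b_t(x)·c_m(x+t) = a_{m+t}(x) - ∑_{t' > t} b_{t'}(x)·c_{m+t-t'}(x+t')`,
since `c_j = 0` for `j > m`. So, by downward induction on `t`, each `b_t` is regular at `α`.
-/

open Polynomial

namespace RatFunc

variable {K : Type*} [Field K]

def regularAt (α : K) : Subring (RatFunc K) where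
  carrier := {f | f.denom.eval α ≠ 0}
  zero_mem' := by simp [denom_zero]
  one_mem' := by simp [denom_one]
  add_mem' {f g} hf hg := ne_zero_of_dvd_ne_zero
    (by rw [Polynomial.eval_mul]; exact mul_ne_zero hf hg) (eval_dvd (denom_add_dvd f g))
  mul_mem' {f g} hf hg := ne_zero_of_dvd_ne_zero
    (by rw [Polynomial.eval_mul]; exact mul_ne_zero hf hg) (eval_dvd (denom_mul_dvd f g))
  neg_mem' {f} hf := by
    have hneg : -f =
        algebraMap K[X] (RatFunc K) (-f.num) / algebraMap K[X] (RatFunc K) f.denom := by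
      rw [map_neg, neg_div, num_div_denom]
    exact ne_zero_of_dvd_ne_zero hf (eval_dvd (hneg ▸ denom_div_dvd _ _))

theorem mem_regularAt {α : K} {f : RatFunc K} : f ∈ regularAt α ↔ f.denom.eval α ≠ 0 :=
  Iff.rfl

theorem algebraMap_mem_regularAt (α : K) (p : K[X]) :
    algebraMap K[X] (RatFunc K) p ∈ regularAt α := by
  simp [mem_regularAt, denom_algebraMap]

theorem inv_algebraMap_mem_regularAt {α : K} {p : K[X]} (hp : p.eval α ≠ 0) :
    (algebraMap K[X] (RatFunc K) p)⁻¹ ∈ regularAt α := by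
  have hdvd := denom_div_dvd (1 : K[X]) p
  rw [map_one, one_div] at hdvd
  exact ne_zero_of_dvd_ne_zero hp (eval_dvd hdvd)

theorem mem_regularAt_of_mul_algebraMap_mem {α : K} {f : RatFunc K} {p : K[X]}
    (hp : p.eval α ≠ 0) (hf : f * algebraMap K[X] (RatFunc K) p ∈ regularAt α) :
    f ∈ regularAt α := by
  have hp0 : algebraMap K[X] (RatFunc K) p ≠ 0 :=
    algebraMap_ne_zero fun h => hp (by rw [h, Polynomial.eval_zero])
  simpa [hp0] using mul_mem hf (inv_algebraMap_mem_regularAt hp)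

end RatFunc

open RatFunc (regularAt algebraMap_mem_regularAt mem_regularAt_of_mul_algebraMap_mem)

section LeftCofactor

variable {K : Type*} [Field K] {N m : ℕ} {a c : ℕ → K[X]} {b : ℕ → RatFunc K} {α : K}

theorem cofactor_coeff_mem_regularAt_of_higher (hcm : ∀ j, m < j → c j = 0)
    {t : ℕ} (ht : t ≤ N)
    (hfact : algebraMap K[X] (RatFunc K) (a (m + t)) =
      ∑ t' ∈ Finset.range (N + 1),
        if t' ≤ m + t then
          b t' * algebraMap K[X] (RatFunc K) ((c (m + t - t')).comp (X + (t' : K[X])))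
        else 0)
    (hct : (c m).eval (α + t) ≠ 0)
    (hhigher : ∀ t', t < t' → t' ≤ N → b t' ∈ regularAt α) :
    b t ∈ regularAt α := by
  rw [← Finset.add_sum_erase _ _ (Finset.mem_range.mpr (Nat.lt_succ_of_le ht)),
    if_pos (Nat.le_add_left t m), Nat.add_sub_cancel] at hfact
  refine mem_regularAt_of_mul_algebraMap_mem (p := (c m).comp (X + (t : K[X])))
    (by simpa [eval_comp] using hct) ?_
  rw [eq_sub_of_add_eq hfact.symm]
  refine sub_mem (algebraMap_mem_regularAt α _) (Subring.sum_mem _ fun t' ht' => ?_)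
  obtain ⟨hne, hlt⟩ := Finset.mem_erase.mp ht'
  split_ifs with hle
  · rcases hne.lt_or_gt with hlow | hhigh
    · simp [hcm (m + t - t') (by omega)]
    · exact mul_mem (hhigher t' hhigh (Nat.lt_succ_iff.mp (Finset.mem_range.mp hlt)))
        (algebraMap_mem_regularAt α _)
  · exact zero_mem _

theorem cofactor_coeff_mem_regularAt (hcm : ∀ j, m < j → c j = 0)
    (hfact : ∀ i : ℕ, algebraMap K[X] (RatFunc K) (a i) =
      ∑ t ∈ Finset.range (N + 1),
        if t ≤ i then b t * algebraMap K[X] (RatFunc K) ((c (i - t)).comp (X + (t : K[X])))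
        else 0)
    (hc : ∀ s, s ≤ N → (c m).eval (α + s) ≠ 0) {t : ℕ} (ht : t ≤ N) :
    b t ∈ regularAt α := by
  induction hk : N - t using Nat.strong_induction_on generalizing t with
  | _ k ih =>
    exact cofactor_coeff_mem_regularAt_of_higher hcm ht (hfact (m + t)) (hc t ht)
      fun t' htt' ht' => ih (N - t') (by omega) ht' rfl

end LeftCofactor

theorem denom_roots_of_factor_general {K : Type*} [Field K]
    (M m : ℕ)
    (a c : ℕ → Polynomial K) (b : ℕ → RatFunc K)
    (hcm : ∀ j, m < j → c j = 0)
    (hfact : ∀ i : ℕ,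
      algebraMap (Polynomial K) (RatFunc K) (a i) =
        ∑ t ∈ Finset.range (M - m + 1),
          if t ≤ i then
            b t * algebraMap (Polynomial K) (RatFunc K)
              ((c (i - t)).comp (Polynomial.X + (t : Polynomial K)))
          else 0) :
    ∀ α : K, (∃ t, t ≤ M - m ∧ Polynomial.eval α ((b t).denom) = 0) →
      ∃ s, s ≤ M - m ∧ Polynomial.eval (α + (s : K)) (c m) = 0 := by
  rintro α ⟨t, ht, hroot⟩
  by_contra! hc
  exact cofactor_coeff_mem_regularAt hcm hfact hc ht hroot

/-- **Lemma (denominators of a left cofactor of recurrence operators).**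
Let `A = ∑ a_i(x)·Sⁱ` and `C = ∑ c_j(x)·Sʲ` be linear recurrence operators with
polynomial coefficients, `c_m ≠ 0`, `m ≤ M`, and let `B = ∑ b_t(x)·Sᵗ` have rational
function coefficients with `A = B·C`, i.e. `a_i(x) = ∑_t b_t(x)·c_{i−t}(x+t)` for all
`i` (operator composition obeying `S·r(x) = r(x+1)·S`).  Then every root `α` of the
denominator of some `b_t` satisfies `c_m(α + s) = 0` for some `0 ≤ s ≤ M − m`. -/
theorem denom_roots_of_factor {K : Type*} [Field K]
    (M m : ℕ) (hm : m ≤ M)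
    (a c : ℕ → Polynomial K) (b : ℕ → RatFunc K)
    (haM : ∀ i, M < i → a i = 0)
    (hcm : ∀ j, m < j → c j = 0)
    (hcm0 : c m ≠ 0)
    (hbM : ∀ t, M - m < t → b t = 0)
    (hfact : ∀ i : ℕ,
      algebraMap (Polynomial K) (RatFunc K) (a i) =
        ∑ t ∈ Finset.range (M - m + 1),
          if t ≤ i then
            b t * algebraMap (Polynomial K) (RatFunc K)
              ((c (i - t)).comp (Polynomial.X + (t : Polynomial K)))
          else 0) :
    ∀ α : K, (∃ t, t ≤ M - m ∧ Polynomial.eval α ((b t).denom) = 0) →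
      ∃ s, s ≤ M - m ∧ Polynomial.eval (α + (s : K)) (c m) = 0 :=
  denom_roots_of_factor_general M m a c b hcm hfact
end

section
/- Define polynomials a_n ∈ ℚ[z] by a_1 = z and a_n = −z²/((2n−3)(2n−1)) for n ≥ 2, and define (P_n) and (Q_n) by P_{−1} = 1, P_0 = 0, Q_{−1} = 0, Q_0 = 1 and, for n ≥ 1, P_n = P_{n−1} + a_n·P_{n−2}, Q_n = Q_{n−1} + a_n·Q_{n−2}. Let H_n := P_n'·Q_n − Q_n² − P_n² − P_n·Q_n', where ' denotes the derivative of polynomials. Then for all n ≥ 0: (2n+1)²·H_{n+1} = z²·H_n. -/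
open Polynomial

/-!
Write `v_n = (P_n, Q_n)`, so that `v_n = v_{n-1} + a_n v_{n-2}`. Expanding `H` at `v_{n-1} + a_n v_{n-2}`
expresses `H_n` through `H_{n-1}`, `H_{n-2}`, the polar form `K_n` of `H` at `(v_n, v_{n-1})` and the
determinant `D_n = P_{n-1} Q_n - P_n Q_{n-1}`, the derivative `a_n'` entering only through `D`.
With `c = 2m + 1` the three relations `K_{m+1} = H_m`, `c D_{m+1} = z H_m` and `c² H_{m+1} = z² H_m`
then propagate together from `m` to `m + 1`, because `c (c + 2) a_{m+2} = -z²`.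
-/

/-- The partial numerators of the continued fraction of `tan`:
`a₁ = z` and `a_n = −z²/((2n−3)(2n−1))` for `n ≥ 2`. -/
noncomputable def tanA (n : ℤ) : Polynomial ℚ :=
  if n = 1 then X
  else C (-(1 : ℚ) / ((2 * (n : ℚ) - 3) * (2 * (n : ℚ) - 1))) * X ^ 2

section Riccati

variable {R : Type*} [CommRing R]

noncomputable def riccatiNum (p q : R[X]) : R[X] :=
  derivative p * q - q ^ 2 - p ^ 2 - p * derivative q

noncomputable def riccatiPolar (p q r s : R[X]) : R[X] :=
  derivative p * s + derivative r * q - p * derivative s - r * derivative q - 2 * q * s - 2 * p * r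

theorem riccatiNum_add_mul (p q r s a : R[X]) :
    riccatiNum (p + a * r) (q + a * s) = riccatiNum p q + a ^ 2 * riccatiNum r s
      + a * riccatiPolar p q r s + derivative a * (r * q - p * s) := by
  simp only [riccatiNum, riccatiPolar, derivative_add, derivative_mul]
  ring

theorem riccatiPolar_add_mul (p q r s a : R[X]) :
    riccatiPolar (p + a * r) (q + a * s) p q = 2 * riccatiNum p q
      + a * riccatiPolar p q r s + derivative a * (r * q - p * s) := by
  simp only [riccatiNum, riccatiPolar, derivative_add, derivative_mul]
  ring

end Riccati

section Invariant

variable {R : Type*} [CommRing R] [IsDomain R]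

/-- In the application `(p, q) = (P_{m+1}, Q_{m+1})`, `(r, s) = (P_m, Q_m)` and `c = 2m + 1`. -/
def TanInvariant (c : R) (p q r s : R[X]) : Prop :=
  riccatiPolar p q r s = riccatiNum r s ∧
  C c * (r * q - p * s) = X * riccatiNum r s ∧
  C c ^ 2 * riccatiNum p q = X ^ 2 * riccatiNum r s

theorem TanInvariant.step {c : R} (hc : c ≠ 0) (hc₂ : c + 2 ≠ 0) {p q r s a : R[X]}
    (ha : C (c * (c + 2)) * a = -X ^ 2) (h : TanInvariant c p q r s) :
    TanInvariant (c + 2) (p + a * r) (q + a * s) p q := by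
  obtain ⟨hK, hD, hH⟩ := h
  have hγ : C c ≠ 0 := C_ne_zero.mpr hc
  have hγ₂ : C c + 2 ≠ 0 := by simpa only [map_add, map_ofNat] using C_ne_zero.mpr hc₂
  simp only [map_mul, map_add, map_ofNat] at ha
  have ha' : C c * (C c + 2) * derivative a = -2 * X := by
    have := congrArg derivative ha
    simp only [derivative_mul, derivative_add, derivative_C, derivative_ofNat, derivative_neg,
      derivative_X_pow, Nat.cast_ofNat, map_ofNat] at this
    linear_combination this
  simp only [TanInvariant, map_add, map_ofNat]
  -- Multiplying by `C c ^ 2` (times `C c + 2` in the first case) clears the denominators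
  -- of `a`, `a'`, `D` and `H_{m+1}`, turning every term into a multiple of `H_m`.
  refine ⟨?_, ?_, ?_⟩
  · apply mul_left_cancel₀ (mul_ne_zero (pow_ne_zero 2 hγ) hγ₂)
    rw [riccatiPolar_add_mul]
    linear_combination (C c + 2) * hH + C c * riccatiPolar p q r s * ha
      - C c * X ^ 2 * hK + C c * (r * q - p * s) * ha' - 2 * X * hD
  · apply mul_left_cancel₀ (pow_ne_zero 2 hγ)
    linear_combination (-C c * (r * q - p * s)) * ha + X ^ 2 * hD - X * hH
  · apply mul_left_cancel₀ (pow_ne_zero 2 hγ)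
    rw [riccatiNum_add_mul]
    linear_combination ((C c + 2) ^ 2 - X ^ 2) * hH
      + riccatiNum r s * (C c * (C c + 2) * a - X ^ 2) * ha
      + C c * (C c + 2) * riccatiPolar p q r s * ha - C c * (C c + 2) * X ^ 2 * hK
      + (C c + 2) * C c * (r * q - p * s) * ha' - 2 * X * (C c + 2) * hD

end Invariant

theorem C_mul_tanA_natCast_add_two (m : ℕ) :
    C ((2 * m + 1) * (2 * m + 1 + 2) : ℚ) * tanA (m + 2) = -X ^ 2 := by
  have hm : (2 * m + 1) * (2 * m + 1 + 2) ≠ (0 : ℚ) := by positivity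
  rw [tanA, if_neg (by omega), ← mul_assoc, ← C_mul]
  push_cast
  rw [show (2 * ((m : ℚ) + 2) - 3) * (2 * (m + 2) - 1) = (2 * m + 1) * (2 * m + 1 + 2) by ring,
    mul_div_cancel₀ _ hm, map_neg, map_one, neg_one_mul]

theorem tanInvariant_convergents (P Q : ℤ → ℚ[X])
    (hPinit : P (-1) = 1 ∧ P 0 = 0) (hQinit : Q (-1) = 0 ∧ Q 0 = 1)
    (hPrec : ∀ n : ℤ, 1 ≤ n → P n = P (n - 1) + tanA n * P (n - 2))
    (hQrec : ∀ n : ℤ, 1 ≤ n → Q n = Q (n - 1) + tanA n * Q (n - 2)) (m : ℕ) :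
    TanInvariant (2 * m + 1 : ℚ) (P (m + 1)) (Q (m + 1)) (P m) (Q m) := by
  induction m with
  | zero =>
    have hP1 : P 1 = X := by simpa [tanA, hPinit] using hPrec 1 le_rfl
    have hQ1 : Q 1 = 1 := by simpa [tanA, hQinit] using hQrec 1 le_rfl
    norm_num [TanInvariant, riccatiNum, riccatiPolar, hP1, hQ1, hPinit, hQinit]
  | succ m ih =>
    have hP := hPrec (m + 2) (by omega)
    have hQ := hQrec (m + 2) (by omega)
    rw [show (m : ℤ) + 2 - 1 = m + 1 by ring, show (m : ℤ) + 2 - 2 = m by ring] at hP hQ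
    push_cast
    rw [show (m : ℤ) + 1 + 1 = m + 2 by ring, hP, hQ,
      show (2 * (m + 1) + 1 : ℚ) = 2 * m + 1 + 2 by ring]
    exact ih.step (by positivity) (by positivity) (C_mul_tanA_natCast_add_two m)

/-- **The first-order recurrence for the remainders of the continued fraction of
`tan`.**  With `P_n/Q_n` the convergents of the continued fraction with partial
numerators `tanA` and `H_n := P_n'·Q_n − Q_n² − P_n² − P_n·Q_n'`, one has
`(2n+1)²·H_{n+1} = z²·H_n` for all `n ≥ 0`. -/
theorem tan_remainder_recurrence
    (P Q : ℤ → Polynomial ℚ)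
    (hPinit : P (-1) = 1 ∧ P 0 = 0) (hQinit : Q (-1) = 0 ∧ Q 0 = 1)
    (hPrec : ∀ n : ℤ, 1 ≤ n → P n = P (n - 1) + tanA n * P (n - 2))
    (hQrec : ∀ n : ℤ, 1 ≤ n → Q n = Q (n - 1) + tanA n * Q (n - 2))
    (H : ℤ → Polynomial ℚ)
    (hH : ∀ n : ℤ, H n = derivative (P n) * Q n - Q n ^ 2 - P n ^ 2 - P n * derivative (Q n)) :
    ∀ n : ℤ, 0 ≤ n →
      C ((2 * (n : ℚ) + 1) ^ 2) * H (n + 1) = X ^ 2 * H n := by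
  intro n hn
  lift n to ℕ using hn with m
  obtain rfl : H = fun n ↦ riccatiNum (P n) (Q n) := funext hH
  rw [Int.cast_natCast, map_pow]
  exact (tanInvariant_convergents P Q hPinit hQinit hPrec hQrec m).2.2
end

section
/- Define polynomials a_n ∈ ℚ[z] by a_1 = z, a_{2k} = −z/(2(2k−1)) for k ≥ 1, and a_{2k+1} = z/(2(2k+1)) for k ≥ 1, and define (P_n) and (Q_n) by P_{−1} = 1, P_0 = 0, Q_{−1} = 0, Q_0 = 1 and, for n ≥ 1, P_n = P_{n−1} + a_n·P_{n−2}, Q_n = Q_{n−1} + a_n·Q_{n−2}. Then for all k ≥ 1: P_{2k+2} = P_{2k} + (z²/(4(4k²−1)))·P_{2k−2}, and the same recurrence holds for Q: Q_{2k+2} = Q_{2k} + (z²/(4(4k²−1)))·Q_{2k−2}. -/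
/-!
Eliminating `u (n + 1)` and `u (n - 1)` from the recurrence `u n = u (n - 1) + a n * u (n - 2)`
(the even contraction of the continued fraction) gives
`u (n + 2) = (1 + a (n + 1) + a (n + 2)) * u n - a (n + 1) * a n * u (n - 2)`.
For the partial numerators of `exp`, `a (2k + 1) + a (2k + 2) = 0` and
`-a (2k + 1) * a (2k) = z² / (4 (4k² - 1))`.
-/

open Polynomial

/-- The partial numerators of the continued fraction of `exp`:
`a₁ = z`, `a_{2k} = −z/(2(2k−1))` and `a_{2k+1} = z/(2(2k+1))` for `k ≥ 1`
(so, for `n ≥ 2`, `a_n = −z/(2(n−1))` if `n` is even and `a_n = z/(2n)` if `n` is odd). -/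
noncomputable def expA (n : ℤ) : Polynomial ℚ :=
  if n = 1 then X
  else if Even n then C (-(1 : ℚ) / (2 * ((n : ℚ) - 1))) * X
  else C ((1 : ℚ) / (2 * (n : ℚ))) * X

theorem recurrence_contraction {R : Type*} [CommRing R] {a u : ℤ → R}
    (hrec : ∀ n : ℤ, 1 ≤ n → u n = u (n - 1) + a n * u (n - 2)) {n : ℤ} (hn : 1 ≤ n) :
    u (n + 2) = (1 + a (n + 1) + a (n + 2)) * u n - a (n + 1) * a n * u (n - 2) := by
  have h₂ := hrec (n + 2) (by omega)
  have h₁ := hrec (n + 1) (by omega)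
  have h₀ := hrec n hn
  simp only [add_sub_cancel_right, show n + 2 - 1 = n + 1 by ring,
    show n + 1 - 2 = n - 1 by ring] at h₂ h₁
  linear_combination h₂ + h₁ - a (n + 1) * h₀

theorem expA_of_even {n : ℤ} (hn : Even n) :
    expA n = C (-(1 : ℚ) / (2 * ((n : ℚ) - 1))) * X := by
  rw [expA, if_neg (by rintro rfl; exact Int.not_even_one hn), if_pos hn]

theorem expA_of_odd {n : ℤ} (hn : Odd n) (hn1 : n ≠ 1) :
    expA n = C ((1 : ℚ) / (2 * (n : ℚ))) * X := by
  rw [expA, if_neg hn1, if_neg (Int.not_even_iff_odd.mpr hn)]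

theorem expA_two_mul_add_one_add_expA_two_mul_add_two {k : ℤ} (hk : 1 ≤ k) :
    expA (2 * k + 1) + expA (2 * k + 2) = 0 := by
  rw [expA_of_odd ⟨k, rfl⟩ (by omega), expA_of_even ⟨k + 1, by ring⟩, ← add_mul, ← C_add]
  push_cast
  rw [show 1 / (2 * (2 * (k : ℚ) + 1)) + -1 / (2 * (2 * k + 2 - 1)) = 0 by ring, C_0, zero_mul]

theorem expA_two_mul_add_one_mul_expA_two_mul {k : ℤ} (hk : 1 ≤ k) :
    expA (2 * k + 1) * expA (2 * k) = - C ((1 : ℚ) / (4 * (4 * (k : ℚ) ^ 2 - 1))) * X ^ 2 := by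
  have hk' : (1 : ℚ) ≤ k := by exact_mod_cast hk
  have h₁ : (2 * (k : ℚ) + 1) ≠ 0 := by linarith
  have h₂ : (2 * (k : ℚ) - 1) ≠ 0 := by linarith
  rw [expA_of_odd ⟨k, rfl⟩ (by omega), expA_of_even ⟨k, by ring⟩, ← C_neg,
    show ∀ c d : ℚ, C c * X * (C d * X) = C (c * d) * X ^ 2 by intro c d; rw [C_mul]; ring]
  congr 2
  push_cast
  rw [show 4 * (4 * (k : ℚ) ^ 2 - 1) = 2 * (2 * k + 1) * (2 * (2 * k - 1)) by ring]
  field_simp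

theorem exp_even_convergents_recurrence_general
    (P Q : ℤ → Polynomial ℚ)
    (hPrec : ∀ n : ℤ, 1 ≤ n → P n = P (n - 1) + expA n * P (n - 2))
    (hQrec : ∀ n : ℤ, 1 ≤ n → Q n = Q (n - 1) + expA n * Q (n - 2)) :
    ∀ k : ℤ, 1 ≤ k →
      P (2 * k + 2) = P (2 * k) +
          C ((1 : ℚ) / (4 * (4 * (k : ℚ) ^ 2 - 1))) * X ^ 2 * P (2 * k - 2) ∧
      Q (2 * k + 2) = Q (2 * k) +
          C ((1 : ℚ) / (4 * (4 * (k : ℚ) ^ 2 - 1))) * X ^ 2 * Q (2 * k - 2) := by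
  intro k hk
  have hsum := expA_two_mul_add_one_add_expA_two_mul_add_two hk
  have hprod := expA_two_mul_add_one_mul_expA_two_mul hk
  have hP := recurrence_contraction hPrec (n := 2 * k) (by omega)
  have hQ := recurrence_contraction hQrec (n := 2 * k) (by omega)
  rw [add_assoc, hsum, hprod] at hP hQ
  constructor
  · linear_combination hP
  · linear_combination hQ

/-- **Recurrence for the even-indexed convergents of the continued fraction of
`exp`.**  For all `k ≥ 1`,
`P_{2k+2} = P_{2k} + (z²/(4(4k²−1)))·P_{2k−2}` and likewise for `Q`. -/
theorem exp_even_convergents_recurrence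
    (P Q : ℤ → Polynomial ℚ)
    (hPinit : P (-1) = 1 ∧ P 0 = 0) (hQinit : Q (-1) = 0 ∧ Q 0 = 1)
    (hPrec : ∀ n : ℤ, 1 ≤ n → P n = P (n - 1) + expA n * P (n - 2))
    (hQrec : ∀ n : ℤ, 1 ≤ n → Q n = Q (n - 1) + expA n * Q (n - 2)) :
    ∀ k : ℤ, 1 ≤ k →
      P (2 * k + 2) = P (2 * k) +
          C ((1 : ℚ) / (4 * (4 * (k : ℚ) ^ 2 - 1))) * X ^ 2 * P (2 * k - 2) ∧
      Q (2 * k + 2) = Q (2 * k) +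
          C ((1 : ℚ) / (4 * (4 * (k : ℚ) ^ 2 - 1))) * X ^ 2 * Q (2 * k - 2) :=
  exp_even_convergents_recurrence_general P Q hPrec hQrec
end

section
/- Define polynomials a_n ∈ ℚ[z] by a_1 = z, a_{2k} = −z/(2(2k−1)) for k ≥ 1, and a_{2k+1} = z/(2(2k+1)) for k ≥ 1, and define (P_n) and (Q_n) by P_{−1} = 1, P_0 = 0, Q_{−1} = 0, Q_0 = 1 and, for n ≥ 1, P_n = P_{n−1} + a_n·P_{n−2}, Q_n = Q_{n−1} + a_n·Q_{n−2}. Let H_{2k} := P_{2k}'·Q_{2k} − P_{2k}·Q_{2k}' − P_{2k}·Q_{2k} − Q_{2k}², where ' denotes the derivative of polynomials. Then for all k ≥ 0: H_{2k+2} = −(z²/(4(2k+1)²))·H_{2k}. -/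
open Polynomial

/-!
Along the recurrence `u_n = u_{n-1} + a_n u_{n-2}` for the pairs `u_n = (P_n, Q_n)`, track the
defect `D_n` (so `H_{2k} = D_{2k}`), its polarisation `K_n` between `u_n` and `u_{n-1}`, and the determinant
`W_n = P_n Q_{n-1} − P_{n-1} Q_n`, which satisfies `W_n = −a_n W_{n-1}`. Because `a_n` is linear in `z`,
one step of the recurrence transforms `(D, K, W)` linearly. At even indices `2k` the three relations
`2 D_{2k} = W_{2k}`, `z D_{2k-1} = −2k W_{2k}`, `K_{2k} = D_{2k-1} + W_{2k}` survive the two steps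
`2k → 2k + 2`, and then `D_{2k+2} / D_{2k} = W_{2k+2} / W_{2k} = a_{2k+1} a_{2k+2}`.
-/

section Defect

variable {R : Type*} [CommRing R]

/-- The numerator of `y' − y − 1` at `y = p / q`. -/
noncomputable def expDefect (p q : R[X]) : R[X] :=
  derivative p * q - p * derivative q - p * q - q ^ 2

/-- The cross term of `expDefect (p + r) (q + s)`. -/
noncomputable def expDefectPolar (p q r s : R[X]) : R[X] :=
  derivative p * s - p * derivative s + derivative r * q - r * derivative q
    - p * s - r * q - 2 * (q * s)

noncomputable def crossDet (p q r s : R[X]) : R[X] :=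
  p * s - r * q

theorem expDefect_add_mul (p q r s f : R[X]) :
    expDefect (p + f * r) (q + f * s) = expDefect p q + f ^ 2 * expDefect r s
      + f * expDefectPolar p q r s - derivative f * crossDet p q r s := by
  simp only [expDefect, expDefectPolar, crossDet, derivative_add, derivative_mul]
  ring

theorem expDefectPolar_add_mul (p q r s f : R[X]) :
    expDefectPolar (p + f * r) (q + f * s) p q
      = 2 * expDefect p q + f * expDefectPolar p q r s - derivative f * crossDet p q r s := by
  simp only [expDefect, expDefectPolar, crossDet, derivative_add, derivative_mul]
  ring

theorem crossDet_add_mul (p q r s f : R[X]) :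
    crossDet (p + f * r) (q + f * s) p q = -f * crossDet p q r s := by
  simp only [crossDet]
  ring

/-- The relations between `(p, q) = (P_{2k}, Q_{2k})` and `(r, s) = (P_{2k-1}, Q_{2k-1})`,
with `c = k`. -/
def ExpInvariant (c : R) (p q r s : R[X]) : Prop :=
  2 * expDefect p q = crossDet p q r s ∧
  X * expDefect r s = -(2 * C c) * crossDet p q r s ∧
  expDefectPolar p q r s = expDefect r s + crossDet p q r s

variable {γ c : R} {p q r s p₁ q₁ p₂ q₂ : R[X]}

theorem expDefect_two_step (hγ : γ * (2 * (2 * c + 1)) = 1) (h : ExpInvariant c p q r s)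
    (hp₁ : p₁ = p + C γ * X * r) (hq₁ : q₁ = q + C γ * X * s)
    (hp₂ : p₂ = p₁ + -(C γ * X) * p) (hq₂ : q₂ = q₁ + -(C γ * X) * q) :
    expDefect p₂ q₂ = -(C (γ ^ 2) * X ^ 2) * expDefect p q := by
  obtain ⟨h₁, h₂, h₃⟩ := h
  have hγ' : C γ * (2 * (2 * C c + 1)) = 1 := by simpa [map_ofNat] using congrArg C hγ
  subst hp₁ hq₁ hp₂ hq₂
  simp only [expDefect_add_mul, expDefectPolar_add_mul, crossDet_add_mul, derivative_neg,
    derivative_C_mul_X, C_pow]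
  set f := C γ * X
  linear_combination (f - f ^ 2) * h₃ + (f ^ 2 + C γ - f + 2 * C γ * C c) * h₁ + C γ * h₂
    - expDefect p q * hγ'

theorem ExpInvariant.two_step (hγ : γ * (2 * (2 * c + 1)) = 1) (h : ExpInvariant c p q r s)
    (hp₁ : p₁ = p + C γ * X * r) (hq₁ : q₁ = q + C γ * X * s)
    (hp₂ : p₂ = p₁ + -(C γ * X) * p) (hq₂ : q₂ = q₁ + -(C γ * X) * q) :
    ExpInvariant (c + 1) p₂ q₂ p₁ q₁ := by
  have hD := expDefect_two_step hγ h hp₁ hq₁ hp₂ hq₂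
  obtain ⟨h₁, h₂, h₃⟩ := h
  have hγ' : C γ * (2 * (2 * C c + 1)) = 1 := by simpa [map_ofNat] using congrArg C hγ
  subst hp₁ hq₁ hp₂ hq₂
  simp only [ExpInvariant, expDefect_add_mul, expDefectPolar_add_mul, crossDet_add_mul,
    derivative_neg, derivative_C_mul_X, C_pow, C_add, C_1] at hD ⊢
  set f := C γ * X
  refine ⟨?_, ?_, ?_⟩
  · linear_combination 2 * hD - f ^ 2 * h₁
  · linear_combination f * X * h₃ + (f ^ 2 + f) * h₂ + f * (2 * C c + 1) * h₁
      - (X * expDefect p q + f * X * crossDet p q r s) * hγ'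
  · linear_combination (f - f ^ 2) * h₃ + C γ * h₂ + ((2 * C c + 1) * C γ - f) * h₁
      - expDefect p q * hγ'

end Defect

noncomputable def expGamma (k : ℤ) : ℚ :=
  (2 * (2 * k + 1))⁻¹

theorem expGamma_mul (k : ℤ) : expGamma k * (2 * (2 * (k : ℚ) + 1)) = 1 := by
  have hk : (2 * (k : ℚ) + 1) ≠ 0 := by
    exact_mod_cast (by omega : 2 * k + 1 ≠ 0)
  rw [expGamma, inv_mul_cancel₀ (mul_ne_zero two_ne_zero hk)]

theorem expA_two_mul_add_one {k : ℤ} (hk : k ≠ 0) : expA (2 * k + 1) = C (expGamma k) * X := by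
  have hodd : ¬Even (2 * k + 1) := Int.not_even_iff_odd.mpr (odd_two_mul_add_one k)
  rw [expA, if_neg (by omega), if_neg hodd, expGamma]
  push_cast
  rw [one_div]

theorem expA_two_mul_add_two (k : ℤ) : expA (2 * k + 2) = -(C (expGamma k) * X) := by
  have heven : Even (2 * k + 2) := ⟨k + 1, by ring⟩
  rw [expA, if_neg (by omega), if_pos heven, expGamma, ← neg_mul, ← C_neg]
  push_cast
  ring_nf

theorem expConvergent_odd_step {F : ℤ → ℚ[X]}
    (hF : ∀ n : ℤ, 1 ≤ n → F n = F (n - 1) + expA n * F (n - 2)) {k : ℤ} (hk : 1 ≤ k) :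
    F (2 * k + 1) = F (2 * k) + C (expGamma k) * X * F (2 * k - 1) := by
  rw [hF _ (by omega), expA_two_mul_add_one (by omega)]
  ring_nf

theorem expConvergent_even_step {F : ℤ → ℚ[X]}
    (hF : ∀ n : ℤ, 1 ≤ n → F n = F (n - 1) + expA n * F (n - 2)) {k : ℤ} (hk : 0 ≤ k) :
    F (2 * k + 2) = F (2 * k + 1) + -(C (expGamma k) * X) * F (2 * k) := by
  rw [hF _ (by omega), expA_two_mul_add_two]
  ring_nf

theorem exists_expInvariant (P Q : ℤ → ℚ[X])
    (hPinit : P (-1) = 1 ∧ P 0 = 0) (hQinit : Q (-1) = 0 ∧ Q 0 = 1)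
    (hPrec : ∀ n : ℤ, 1 ≤ n → P n = P (n - 1) + expA n * P (n - 2))
    (hQrec : ∀ n : ℤ, 1 ≤ n → Q n = Q (n - 1) + expA n * Q (n - 2)) :
    ∀ k : ℤ, 0 ≤ k → ∃ r s : ℚ[X], ExpInvariant (k : ℚ) (P (2 * k)) (Q (2 * k)) r s ∧
      P (2 * k + 1) = P (2 * k) + C (expGamma k) * X * r ∧
      Q (2 * k + 1) = Q (2 * k) + C (expGamma k) * X * s := by
  intro k hk
  induction k, hk using Int.leInduction with
  | base =>
    -- `a₁ = 2 γ₀ z` breaks the pattern, so the doubled pair `2 (P₋₁, Q₋₁)` stands in for `(P₋₁, Q₋₁)`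
    have hP₁ := hPrec 1 le_rfl
    have hQ₁ := hQrec 1 le_rfl
    norm_num [hPinit, hQinit, expA] at hP₁ hQ₁ ⊢
    refine ⟨2, 0, ?_, ?_, by simpa using hQ₁⟩
    · norm_num [ExpInvariant, expDefect, expDefectPolar, crossDet]
    · rw [hP₁, mul_right_comm, ← map_ofNat C 2, ← C_mul, expGamma]
      norm_num
  | succ k hk ih =>
    obtain ⟨r, s, hinv, hP, hQ⟩ := ih
    have hodd : 2 * (k + 1) - 1 = 2 * k + 1 := by ring
    have hP₃ := expConvergent_odd_step hPrec (by omega : 1 ≤ k + 1)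
    have hQ₃ := expConvergent_odd_step hQrec (by omega : 1 ≤ k + 1)
    rw [hodd] at hP₃ hQ₃
    refine ⟨P (2 * k + 1), Q (2 * k + 1), ?_, hP₃, hQ₃⟩
    rw [show 2 * (k + 1) = 2 * k + 2 by ring]
    push_cast
    exact hinv.two_step (expGamma_mul k) hP hQ (expConvergent_even_step hPrec hk)
      (expConvergent_even_step hQrec hk)

/-- **First-order recurrence for the even-indexed remainders of the continued
fraction of `exp`.**  With `H_{2k} := P_{2k}'·Q_{2k} − P_{2k}·Q_{2k}' − P_{2k}·Q_{2k}
− Q_{2k}²`, one has `H_{2k+2} = −(z²/(4(2k+1)²))·H_{2k}` for all `k ≥ 0`. -/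
theorem exp_remainder_recurrence
    (P Q : ℤ → Polynomial ℚ)
    (hPinit : P (-1) = 1 ∧ P 0 = 0) (hQinit : Q (-1) = 0 ∧ Q 0 = 1)
    (hPrec : ∀ n : ℤ, 1 ≤ n → P n = P (n - 1) + expA n * P (n - 2))
    (hQrec : ∀ n : ℤ, 1 ≤ n → Q n = Q (n - 1) + expA n * Q (n - 2))
    (H : ℤ → Polynomial ℚ)
    (hH : ∀ k : ℤ, H (2 * k) =
      derivative (P (2 * k)) * Q (2 * k) - P (2 * k) * derivative (Q (2 * k))
        - P (2 * k) * Q (2 * k) - Q (2 * k) ^ 2) :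
    ∀ k : ℤ, 0 ≤ k →
      H (2 * k + 2) = -(C ((1 : ℚ) / (4 * (2 * (k : ℚ) + 1) ^ 2)) * X ^ 2) * H (2 * k) := by
  intro k hk
  obtain ⟨r, s, hinv, hP, hQ⟩ := exists_expInvariant P Q hPinit hQinit hPrec hQrec k hk
  have hγ : expGamma k ^ 2 = 1 / (4 * (2 * (k : ℚ) + 1) ^ 2) := by
    rw [expGamma, inv_pow, mul_pow, one_div]
    norm_num
  have hH₂ : H (2 * k + 2) = expDefect (P (2 * k + 2)) (Q (2 * k + 2)) := by
    rw [show 2 * k + 2 = 2 * (k + 1) by ring, hH, expDefect]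
  rw [hH₂, hH, ← expDefect, ← hγ]
  exact expDefect_two_step (expGamma_mul k) hinv hP hQ (expConvergent_even_step hPrec hk)
    (expConvergent_even_step hQrec hk)
end

section
/- Let K = ℚ(q) be the field of rational functions in q over ℚ. Define polynomials a_n ∈ K[z] by a_1 = z, a_{2k} = −q^{k−1}(1−q)·z/((1+q^k)(1−q^{2k−1})) for k ≥ 1, and a_{2k+1} = q^{2k}(1−q)·z/((1+q^k)(1−q^{2k+1})) for k ≥ 1, and define (P_n) and (Q_n) by P_{−1} = 1, P_0 = 0, Q_{−1} = 0, Q_0 = 1 and, for n ≥ 1, P_n = P_{n−1} + a_n·P_{n−2}, Q_n = Q_{n−1} + a_n·Q_{n−2}. Then for all k ≥ 1: P_{2k+2} = (1 − (1−q)q^k·z/((1+q^k)(1+q^{k+1})))·P_{2k} + (q^{3k−1}(1−q)²·z²/((1+q^k)²(1−q^{2k+1})(1−q^{2k−1})))·P_{2k−2}, and the same recurrence holds for Q. -/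
/-- The indeterminate `q`, as an element of the field `ℚ(q)` of rational functions. -/
noncomputable def qq : RatFunc ℚ := RatFunc.X

/-- The partial numerators of the continued fraction of the `q`-exponential:
`a₁ = z`, `a_{2k} = −q^{k−1}(1−q)z/((1+q^k)(1−q^{2k−1}))` and
`a_{2k+1} = q^{2k}(1−q)z/((1+q^k)(1−q^{2k+1}))` for `k ≥ 1`. -/
noncomputable def qexpA (n : ℤ) : Polynomial (RatFunc ℚ) :=
  if n = 1 then Polynomial.X
  else if Even n then
    -- `n = 2k`, `k = n/2`
    Polynomial.C (-(qq ^ (n / 2 - 1) * (1 - qq)) / ((1 + qq ^ (n / 2)) * (1 - qq ^ (n - 1)))) *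
      Polynomial.X
  else
    -- `n = 2k+1`, `k = (n−1)/2`
    Polynomial.C (qq ^ (n - 1) * (1 - qq) / ((1 + qq ^ ((n - 1) / 2)) * (1 - qq ^ n))) *
      Polynomial.X

/-!
Eliminating the odd-indexed terms from `x n = x (n - 1) + a n * x (n - 2)` gives, for any
partial numerators, `x (m + 2) = (1 + a (m + 1) + a (m + 2)) * x m - a (m + 1) * a m * x (m - 2)`.
For `m = 2k` and the partial numerators of `e_q`, writing `t = q^k`, the sum
`a_{2k+1} + a_{2k+2}` loses its common factor `1 - t²q` and becomes the linear coefficient,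
while `-a_{2k+1} a_{2k}` is the quadratic coefficient on the nose.
-/

open Polynomial

lemma one_add_qq_pow_ne_zero (n : ℕ) : 1 + qq ^ n ≠ 0 := by
  have h : 1 + qq ^ n = algebraMap ℚ[X] (RatFunc ℚ) (1 + X ^ n) := by
    simp [qq, RatFunc.algebraMap_X]
  rw [h, ne_eq, map_eq_zero_iff _ (RatFunc.algebraMap_injective ℚ)]
  intro hzero
  simpa using congrArg (eval 1) hzero

lemma one_sub_qq_pow_ne_zero {n : ℕ} (hn : n ≠ 0) : 1 - qq ^ n ≠ 0 := by
  have h : 1 - qq ^ n = algebraMap ℚ[X] (RatFunc ℚ) (1 - X ^ n) := by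
    simp [qq, RatFunc.algebraMap_X]
  rw [h, ne_eq, map_eq_zero_iff _ (RatFunc.algebraMap_injective ℚ)]
  intro hzero
  simpa [zero_pow hn] using congrArg (eval 0) hzero

lemma one_add_qq_zpow_ne_zero {n : ℤ} (hn : 0 ≤ n) : 1 + qq ^ n ≠ 0 := by
  lift n to ℕ using hn
  exact_mod_cast one_add_qq_pow_ne_zero n

lemma one_sub_qq_zpow_ne_zero {n : ℤ} (hn : 1 ≤ n) : 1 - qq ^ n ≠ 0 := by
  lift n to ℕ using (by omega)
  exact_mod_cast one_sub_qq_pow_ne_zero (n := n) (by omega)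

theorem recurrence_contract_two {R : Type*} [CommRing R] {x a : ℤ → R} {m : ℤ}
    (hrec : ∀ n, m ≤ n → x n = x (n - 1) + a n * x (n - 2)) :
    x (m + 2) = (1 + a (m + 1) + a (m + 2)) * x m - a (m + 1) * a m * x (m - 2) := by
  have h₀ := hrec m le_rfl
  have h₁ := hrec (m + 1) (by omega)
  have h₂ := hrec (m + 2) (by omega)
  simp only [add_sub_cancel_right, show m + 1 - 2 = m - 1 by ring,
    show m + 2 - 1 = m + 1 by ring] at h₀ h₁ h₂
  linear_combination h₂ + h₁ - a (m + 1) * h₀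

section CoefficientIdentities

variable {F : Type*} [Field F] {q : F}

theorem qexp_coeff_odd_add_even (hq : q ≠ 0) (k : ℤ) (h₁ : 1 + q ^ k ≠ 0)
    (h₂ : 1 + q ^ (k + 1) ≠ 0) (h₃ : 1 - q ^ (2 * k + 1) ≠ 0) :
    q ^ (2 * k) * (1 - q) / ((1 + q ^ k) * (1 - q ^ (2 * k + 1))) +
        -(q ^ k * (1 - q)) / ((1 + q ^ (k + 1)) * (1 - q ^ (2 * k + 1))) =
      -((1 - q) * q ^ k / ((1 + q ^ k) * (1 + q ^ (k + 1)))) := by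
  have hden := mul_ne_zero (mul_ne_zero h₁ h₃) (mul_ne_zero h₂ h₃)
  rw [div_add_div _ _ (mul_ne_zero h₁ h₃) (mul_ne_zero h₂ h₃), ← neg_div,
    div_eq_div_iff hden (mul_ne_zero h₁ h₂), zpow_add_one₀ hq, zpow_add_one₀ hq, two_mul,
    zpow_add₀ hq]
  ring

theorem qexp_coeff_odd_mul_even (hq : q ≠ 0) (k : ℤ) :
    q ^ (2 * k) * (1 - q) / ((1 + q ^ k) * (1 - q ^ (2 * k + 1))) *
        (-(q ^ (k - 1) * (1 - q)) / ((1 + q ^ k) * (1 - q ^ (2 * k - 1)))) =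
      -(q ^ (3 * k - 1) * (1 - q) ^ 2 /
        ((1 + q ^ k) ^ 2 * (1 - q ^ (2 * k + 1)) * (1 - q ^ (2 * k - 1)))) := by
  rw [show q ^ (3 * k - 1) = q ^ (2 * k) * q ^ (k - 1) by rw [← zpow_add₀ hq]; ring_nf,
    div_mul_div_comm, ← neg_div]
  congr 1 <;> ring

end CoefficientIdentities

lemma qexpA_two_mul (k : ℤ) :
    qexpA (2 * k) =
      C (-(qq ^ (k - 1) * (1 - qq)) / ((1 + qq ^ k) * (1 - qq ^ (2 * k - 1)))) * X := by
  rw [qexpA, if_neg (by omega), if_pos (even_two_mul k), Int.mul_ediv_cancel_left _ two_ne_zero]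

lemma qexpA_two_mul_add_one {k : ℤ} (hk : k ≠ 0) :
    qexpA (2 * k + 1) =
      C (qq ^ (2 * k) * (1 - qq) / ((1 + qq ^ k) * (1 - qq ^ (2 * k + 1)))) * X := by
  rw [qexpA, if_neg (by omega), if_neg (Int.not_even_two_mul_add_one k), add_sub_cancel_right,
    Int.mul_ediv_cancel_left _ two_ne_zero]

lemma one_add_qexpA_odd_add_even {k : ℤ} (hk : 1 ≤ k) :
    1 + qexpA (2 * k + 1) + qexpA (2 * k + 2) =
      1 - C ((1 - qq) * qq ^ k / ((1 + qq ^ k) * (1 + qq ^ (k + 1)))) * X := by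
  have hq : qq ≠ 0 := RatFunc.X_ne_zero
  rw [show 2 * k + 2 = 2 * (k + 1) by ring, qexpA_two_mul, qexpA_two_mul_add_one (by omega),
    add_sub_cancel_right, show 2 * (k + 1) - 1 = 2 * k + 1 by ring, add_assoc, ← add_mul, ← C_add,
    qexp_coeff_odd_add_even hq k (one_add_qq_zpow_ne_zero (by omega))
      (one_add_qq_zpow_ne_zero (by omega)) (one_sub_qq_zpow_ne_zero (by omega)), C_neg]
  ring

lemma qexpA_odd_mul_even {k : ℤ} (hk : k ≠ 0) :
    qexpA (2 * k + 1) * qexpA (2 * k) =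
      -(C (qq ^ (3 * k - 1) * (1 - qq) ^ 2 /
          ((1 + qq ^ k) ^ 2 * (1 - qq ^ (2 * k + 1)) * (1 - qq ^ (2 * k - 1)))) * X ^ 2) := by
  rw [qexpA_two_mul_add_one hk, qexpA_two_mul, mul_mul_mul_comm, ← C_mul,
    qexp_coeff_odd_mul_even RatFunc.X_ne_zero k, C_neg, sq]
  ring

theorem qexp_convergent_even_recurrence {x : ℤ → (RatFunc ℚ)[X]}
    (hrec : ∀ n : ℤ, 1 ≤ n → x n = x (n - 1) + qexpA n * x (n - 2)) {k : ℤ} (hk : 1 ≤ k) :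
    x (2 * k + 2) =
      (1 - C ((1 - qq) * qq ^ k / ((1 + qq ^ k) * (1 + qq ^ (k + 1)))) * X) * x (2 * k) +
        C (qq ^ (3 * k - 1) * (1 - qq) ^ 2 /
            ((1 + qq ^ k) ^ 2 * (1 - qq ^ (2 * k + 1)) * (1 - qq ^ (2 * k - 1)))) *
          X ^ 2 * x (2 * k - 2) := by
  rw [recurrence_contract_two (m := 2 * k) fun n hn => hrec n (by omega),
    one_add_qexpA_odd_add_even hk, qexpA_odd_mul_even (by omega)]
  ring

theorem qexp_even_convergents_recurrence_general
    (P Q : ℤ → Polynomial (RatFunc ℚ))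
    (hPrec : ∀ n : ℤ, 1 ≤ n → P n = P (n - 1) + qexpA n * P (n - 2))
    (hQrec : ∀ n : ℤ, 1 ≤ n → Q n = Q (n - 1) + qexpA n * Q (n - 2)) :
    ∀ k : ℤ, 1 ≤ k →
      P (2 * k + 2) =
        (1 - Polynomial.C ((1 - qq) * qq ^ k / ((1 + qq ^ k) * (1 + qq ^ (k + 1)))) *
            Polynomial.X) * P (2 * k) +
          Polynomial.C (qq ^ (3 * k - 1) * (1 - qq) ^ 2 /
              ((1 + qq ^ k) ^ 2 * (1 - qq ^ (2 * k + 1)) * (1 - qq ^ (2 * k - 1)))) *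
            Polynomial.X ^ 2 * P (2 * k - 2) ∧
      Q (2 * k + 2) =
        (1 - Polynomial.C ((1 - qq) * qq ^ k / ((1 + qq ^ k) * (1 + qq ^ (k + 1)))) *
            Polynomial.X) * Q (2 * k) +
          Polynomial.C (qq ^ (3 * k - 1) * (1 - qq) ^ 2 /
              ((1 + qq ^ k) ^ 2 * (1 - qq ^ (2 * k + 1)) * (1 - qq ^ (2 * k - 1)))) *
            Polynomial.X ^ 2 * Q (2 * k - 2) :=
  fun _ hk =>
    ⟨qexp_convergent_even_recurrence hPrec hk, qexp_convergent_even_recurrence hQrec hk⟩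

/-- **Recurrence for the even-indexed convergents of the continued fraction of the
`q`-exponential.**  For all `k ≥ 1`,
`P_{2k+2} = (1 − (1−q)q^k z/((1+q^k)(1+q^{k+1})))·P_{2k}
  + (q^{3k−1}(1−q)² z²/((1+q^k)²(1−q^{2k+1})(1−q^{2k−1})))·P_{2k−2}`,
and likewise for `Q`. -/
theorem qexp_even_convergents_recurrence
    (P Q : ℤ → Polynomial (RatFunc ℚ))
    (hPinit : P (-1) = 1 ∧ P 0 = 0) (hQinit : Q (-1) = 0 ∧ Q 0 = 1)
    (hPrec : ∀ n : ℤ, 1 ≤ n → P n = P (n - 1) + qexpA n * P (n - 2))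
    (hQrec : ∀ n : ℤ, 1 ≤ n → Q n = Q (n - 1) + qexpA n * Q (n - 2)) :
    ∀ k : ℤ, 1 ≤ k →
      P (2 * k + 2) =
        (1 - Polynomial.C ((1 - qq) * qq ^ k / ((1 + qq ^ k) * (1 + qq ^ (k + 1)))) *
            Polynomial.X) * P (2 * k) +
          Polynomial.C (qq ^ (3 * k - 1) * (1 - qq) ^ 2 /
              ((1 + qq ^ k) ^ 2 * (1 - qq ^ (2 * k + 1)) * (1 - qq ^ (2 * k - 1)))) *
            Polynomial.X ^ 2 * P (2 * k - 2) ∧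
      Q (2 * k + 2) =
        (1 - Polynomial.C ((1 - qq) * qq ^ k / ((1 + qq ^ k) * (1 + qq ^ (k + 1)))) *
            Polynomial.X) * Q (2 * k) +
          Polynomial.C (qq ^ (3 * k - 1) * (1 - qq) ^ 2 /
              ((1 + qq ^ k) ^ 2 * (1 - qq ^ (2 * k + 1)) * (1 - qq ^ (2 * k - 1)))) *
            Polynomial.X ^ 2 * Q (2 * k - 2) :=
  qexp_even_convergents_recurrence_general P Q hPrec hQrec
end
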